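/- arXiv:2504.02944 — 11 statements merged into one kernel-verified Lean document; each statement's English description precedes it below -/
import Mathlib

section
/- Let d ≥ 1 and let M be a multi-measurement on ℂ^d with finite outcome set B and finite setting set Y. Then M is classical if and only if there exist a finite index set Λ', positive semidefinite d×d matrices G'_μ with ∑_μ G'_μ = 1, and points D_μ which are extreme points of the noncontextual measurement-assignment polytope 𝕡_M (i.e. D_μ ∈ 𝕡_M and whenever D_μ lies strictly between two points of 𝕡_M both of them equal D_μ), such that M_{b|y} = ∑_{μ∈Λ'} D_μ(b,y) • G'_μ for all b ∈ B and y ∈ Y. -/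
open Matrix BigOperators
open scoped ComplexOrder

noncomputable section

/-- The noncontextual measurement-assignment polytope of a multi-measurement. -/
def multiPolytope {d : ℕ} {B Y : Type*} [Fintype B] [Fintype Y]
    (M : B × Y → Matrix (Fin d) (Fin d) ℂ) : Set (B × Y → ℝ) :=
  {q | (∀ p, 0 ≤ q p) ∧ (∀ y : Y, ∑ b : B, q (b, y) = 1) ∧
    ∀ β : B × Y → ℝ, (∑ p : B × Y, β p • M p = 0) → (∑ p : B × Y, β p * q p = 0)}

/-- A multi-measurement is classical. -/
def IsClassicalMulti {d : ℕ} {B Y : Type*} [Fintype B] [Fintype Y]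
    (M : B × Y → Matrix (Fin d) (Fin d) ℂ) : Prop :=
  ∃ (n : ℕ) (G : Fin n → Matrix (Fin d) (Fin d) ℂ) (q : Fin n → B × Y → ℝ),
    (∀ l, (G l).PosSemidef) ∧ (∑ l, G l = 1) ∧
    (∀ l, q l ∈ multiPolytope M) ∧
    (∀ b : B, ∀ y : Y, M (b, y) = ∑ l, q l (b, y) • G l)

/-!
Writing each response function `q_λ` of a classical model as a convex combination of extreme
points of `𝕡_M` and absorbing the weights into the effects `G_λ` gives a model with extreme
response functions. That every point of `𝕡_M` is such a convex combination is Minkowski's theorem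
for this polytope, proved by induction on the support: a non-extreme point `x` lies inside a
segment of `𝕡_M` with direction `v`; since all points of `𝕡_M` have the same coordinate sum, `v`
has coordinates of both signs, so moving from `x` along `v` and along `-v` until a coordinate
vanishes gives two points of `𝕡_M` with smaller support having `x` between them.
-/

section Orthant

variable {ι : Type*}

lemma exists_neg_of_sum_eq_zero [Fintype ι] {v : ι → ℝ} (hv : v ≠ 0) (hsum : ∑ i, v i = 0) :
    ∃ i, v i < 0 := by
  by_contra! hnonneg
  exact hv (funext fun i => (Finset.sum_eq_zero_iff_of_nonneg fun j _ => hnonneg j).1 hsum i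
    (Finset.mem_univ i))

lemma support_subset_of_mem_openSegment {x y z : ι → ℝ} (hy : 0 ≤ y) (hz : 0 ≤ z)
    (hx : x ∈ openSegment ℝ y z) : Function.support y ⊆ Function.support x := by
  obtain ⟨a, b, ha, hb, -, rfl⟩ := hx
  intro i hyi hxi
  have : a * y i + b * z i = 0 := by simpa using hxi
  have : a * y i = 0 := by nlinarith [mul_nonneg hb.le (hz i), mul_nonneg ha.le (hy i)]
  exact hyi (by simpa [ha.ne'] using this)

/-- Move from `x` along `v` until the first coordinate vanishes. -/
lemma exists_add_smul_nonneg_support_ssubset [Fintype ι] {x v : ι → ℝ} (hx : 0 ≤ x)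
    (hsupp : Function.support v ⊆ Function.support x) (hneg : ∃ i, v i < 0) :
    ∃ t : ℝ, 0 < t ∧ 0 ≤ x + t • v ∧ Function.support (x + t • v) ⊂ Function.support x := by
  classical
  obtain ⟨i₀, hi₀, hmin⟩ := (Finset.univ.filter (v · < 0)).exists_min_image
    (fun i => x i / -v i) (by simpa [Finset.filter_nonempty_iff] using hneg)
  simp only [Finset.mem_filter, Finset.mem_univ, true_and] at hi₀ hmin
  have hxpos : ∀ i, v i < 0 → 0 < x i := fun i hi => (hx i).lt_of_ne' (hsupp hi.ne)
  refine ⟨x i₀ / -v i₀, div_pos (hxpos i₀ hi₀) (neg_pos.2 hi₀), fun i => ?_, ?_⟩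
  · rcases lt_or_ge (v i) 0 with hi | hi
    · have := (le_div_iff₀ (neg_pos.2 hi)).1 (hmin i hi)
      simp only [Pi.zero_apply, Pi.add_apply, Pi.smul_apply, smul_eq_mul]
      nlinarith
    · exact add_nonneg (hx i) (mul_nonneg (div_pos (hxpos i₀ hi₀) (neg_pos.2 hi₀)).le hi)
  · have hsub : Function.support (x + (x i₀ / -v i₀) • v) ⊆ Function.support x := by
      intro i hi hxi
      have hvi : v i = 0 := Function.notMem_support.1 fun h => hsupp h hxi
      simp [hxi, hvi] at hi
    refine (Set.ssubset_iff_of_subset hsub).2 ⟨i₀, (hxpos i₀ hi₀).ne', ?_⟩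
    simp only [Function.mem_support, Pi.add_apply, Pi.smul_apply, smul_eq_mul, not_not]
    field_simp [hi₀.ne]
    ring

theorem Ici_inter_affineSubspace_subset_convexHull_extremePoints [Fintype ι]
    (A : AffineSubspace ℝ (ι → ℝ)) {c : ℝ} (hA : ∀ x ∈ A, ∑ i, x i = c) :
    Set.Ici 0 ∩ (A : Set (ι → ℝ)) ⊆
      convexHull ℝ ((Set.Ici 0 ∩ (A : Set (ι → ℝ))).extremePoints ℝ) := by
  set P := Set.Ici 0 ∩ (A : Set (ι → ℝ))
  intro x hx
  induction h : (Function.support x).ncard using Nat.strong_induction_on generalizing x with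
  | _ n ih =>
  by_cases hext : x ∈ P.extremePoints ℝ
  · exact subset_convexHull ℝ _ hext
  obtain ⟨y, hy, z, hz, hxyz, hyx⟩ : ∃ y ∈ P, ∃ z ∈ P, x ∈ openSegment ℝ y z ∧ y ≠ x := by
    simpa [mem_extremePoints_iff_left, hx] using hext
  set v := y - x
  have hvA : v ∈ A.direction := AffineSubspace.vsub_mem_direction hy.2 hx.2
  have hvsupp : Function.support v ⊆ Function.support x :=
    (Function.support_sub _ _).trans
      (Set.union_subset (support_subset_of_mem_openSegment hy.1 hz.1 hxyz) subset_rfl)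
  have hvsum : ∑ i, v i = 0 := by
    simp [v, Finset.sum_sub_distrib, hA _ hy.2, hA _ hx.2]
  have hv : v ≠ 0 := sub_ne_zero.2 hyx
  have hmem : ∀ w ∈ A.direction, 0 ≤ x + w → x + w ∈ P := fun w hw hnn =>
    ⟨hnn, by simpa [add_comm] using AffineSubspace.vadd_mem_of_mem_direction hw hx.2⟩
  have hsmaller : ∀ w, Function.support (x + w) ⊂ Function.support x →
      (Function.support (x + w)).ncard < n := fun w hw =>
    h ▸ Set.ncard_lt_ncard hw (Set.toFinite _)
  obtain ⟨s, hs, hxs, hsupps⟩ :=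
    exists_add_smul_nonneg_support_ssubset hx.1 hvsupp (exists_neg_of_sum_eq_zero hv hvsum)
  obtain ⟨t, ht, hxt, hsuppt⟩ := exists_add_smul_nonneg_support_ssubset hx.1
    ((Function.support_neg v).trans_subset hvsupp)
    (exists_neg_of_sum_eq_zero (neg_ne_zero.2 hv) (by simp [hvsum]))
  have hs_mem := ih _ (hsmaller _ hsupps) (hmem _ (A.direction.smul_mem s hvA) hxs) rfl
  have ht_mem := ih _ (hsmaller _ hsuppt)
    (hmem _ (A.direction.smul_mem t (A.direction.neg_mem hvA)) hxt) rfl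
  -- `x` divides the segment from `x + s • v` to `x - t • v` in the ratio `s : t`
  refine (convex_convexHull ℝ _).openSegment_subset hs_mem ht_mem
    ⟨t / (s + t), s / (s + t), by positivity, by positivity,
      by rw [← add_div, add_comm, div_self (by positivity)], ?_⟩
  ext i
  simp only [Pi.add_apply, Pi.smul_apply, Pi.neg_apply, smul_eq_mul]
  field_simp
  ring

end Orthant

section Decomposition

variable {V : Type*} [AddCommGroup V] [Module ℝ V] {α β : Type*}

def HasDecomposition (K : Set V) (e : V) (S : Set (α × β → ℝ)) (m : α × β → V) : Prop :=
  ∃ (n : ℕ) (G : Fin n → V) (q : Fin n → α × β → ℝ),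
    (∀ l, G l ∈ K) ∧ (∑ l, G l = e) ∧ (∀ l, q l ∈ S) ∧
    (∀ a b, m (a, b) = ∑ l, q l (a, b) • G l)

variable {K : Set V} {e : V} {S T : Set (α × β → ℝ)} {m : α × β → V}

lemma HasDecomposition.mono (h : HasDecomposition K e S m) (hST : S ⊆ T) :
    HasDecomposition K e T m := by
  obtain ⟨n, G, q, hG, hsum, hq, hm⟩ := h
  exact ⟨n, G, q, hG, hsum, fun l => hST (hq l), hm⟩

lemma HasDecomposition.of_fintype {σ : Type*} [Fintype σ] (G : σ → V) (q : σ → α × β → ℝ)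
    (hG : ∀ s, G s ∈ K) (hsum : ∑ s, G s = e) (hq : ∀ s, q s ∈ S)
    (hm : ∀ a b, m (a, b) = ∑ s, q s (a, b) • G s) : HasDecomposition K e S m := by
  let f := (Fintype.equivFin σ).symm
  refine ⟨Fintype.card σ, G ∘ f, q ∘ f, fun l => hG _, ?_, fun l => hq _, fun a b => ?_⟩
  · rw [← hsum]
    exact Equiv.sum_comp f G
  · rw [hm]
    exact (Equiv.sum_comp f fun s => q s (a, b) • G s).symm

lemma HasDecomposition.of_convexHull (hK : ∀ c : ℝ, 0 ≤ c → ∀ G ∈ K, c • G ∈ K)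
    (h : HasDecomposition K e (convexHull ℝ S) m) : HasDecomposition K e S m := by
  obtain ⟨n, G, q, hG, hsum, hq, hm⟩ := h
  choose σ _ w z hw₀ hw₁ hz hwz using fun l => mem_convexHull_iff_exists_fintype.1 (hq l)
  refine .of_fintype (σ := Σ l, σ l) (fun s => w s.1 s.2 • G s.1) (fun s => z s.1 s.2)
    (fun s => hK _ (hw₀ _ _) _ (hG _)) ?_ (fun s => hz _ _) fun a b => ?_
  · simp only [Fintype.sum_sigma, ← Finset.sum_smul, hw₁, one_smul, hsum]
  · rw [hm, Fintype.sum_sigma]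
    refine Finset.sum_congr rfl fun l _ => ?_
    calc q l (a, b) • G l = (∑ j, w l j * z l j (a, b)) • G l := by
          simp [← hwz l, Finset.sum_apply]
      _ = ∑ j, z l j (a, b) • w l j • G l := by
          simp only [Finset.sum_smul, smul_smul, mul_comm]

end Decomposition

section MultiPolytope

variable {d : ℕ} {B Y : Type*} [Fintype B] [Fintype Y]

def multiAffineSubspace (M : B × Y → Matrix (Fin d) (Fin d) ℂ) :
    AffineSubspace ℝ (B × Y → ℝ) where
  carrier := {q | (∀ y : Y, ∑ b : B, q (b, y) = 1) ∧
    ∀ β : B × Y → ℝ, (∑ p : B × Y, β p • M p = 0) → (∑ p : B × Y, β p * q p = 0)}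
  smul_vsub_vadd_mem' c q₁ q₂ q₃ h₁ h₂ h₃ := by
    refine ⟨fun y => ?_, fun β hβ => ?_⟩
    · simp [Finset.sum_add_distrib, ← Finset.mul_sum, Finset.sum_sub_distrib, h₁.1, h₂.1, h₃.1]
    · simp [mul_add, mul_sub, mul_left_comm _ c, Finset.sum_add_distrib, ← Finset.mul_sum,
        Finset.sum_sub_distrib, h₁.2 β hβ, h₂.2 β hβ, h₃.2 β hβ]

lemma multiPolytope_eq (M : B × Y → Matrix (Fin d) (Fin d) ℂ) :
    multiPolytope M = Set.Ici 0 ∩ (multiAffineSubspace M : Set (B × Y → ℝ)) :=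
  rfl

lemma sum_eq_card_of_mem_multiAffineSubspace {M : B × Y → Matrix (Fin d) (Fin d) ℂ}
    {q : B × Y → ℝ} (hq : q ∈ multiAffineSubspace M) : ∑ p, q p = Fintype.card Y := by
  simp [Fintype.sum_prod_type_right, hq.1]

lemma multiPolytope_subset_convexHull_extremePoints (M : B × Y → Matrix (Fin d) (Fin d) ℂ) :
    multiPolytope M ⊆ convexHull ℝ ((multiPolytope M).extremePoints ℝ) := by
  rw [multiPolytope_eq]
  exact Ici_inter_affineSubspace_subset_convexHull_extremePoints _
    fun _ => sum_eq_card_of_mem_multiAffineSubspace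

end MultiPolytope

theorem classical_iff_extreme_point_decomposition_general
    {d : ℕ} {B Y : Type*} [Fintype B] [Fintype Y]
    (M : B × Y → Matrix (Fin d) (Fin d) ℂ) :
    IsClassicalMulti M ↔
      ∃ (n : ℕ) (G : Fin n → Matrix (Fin d) (Fin d) ℂ) (D : Fin n → B × Y → ℝ),
        (∀ μ, (G μ).PosSemidef) ∧ (∑ μ, G μ = 1) ∧
        (∀ μ, D μ ∈ (multiPolytope M).extremePoints ℝ) ∧
        (∀ b : B, ∀ y : Y, M (b, y) = ∑ μ, D μ (b, y) • G μ) := by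
  change HasDecomposition {G | G.PosSemidef} 1 (multiPolytope M) M ↔
    HasDecomposition {G | G.PosSemidef} 1 ((multiPolytope M).extremePoints ℝ) M
  have hcone : ∀ c : ℝ, 0 ≤ c → ∀ G ∈ {G : Matrix (Fin d) (Fin d) ℂ | G.PosSemidef},
      c • G ∈ {G : Matrix (Fin d) (Fin d) ℂ | G.PosSemidef} :=
    fun c hc G hG => hG.smul hc
  exact ⟨fun h => (h.mono (multiPolytope_subset_convexHull_extremePoints M)).of_convexHull hcone,
    fun h => h.mono extremePoints_subset⟩

theorem classical_iff_extreme_point_decomposition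
    {d : ℕ} (hd : 1 ≤ d) {B Y : Type*} [Fintype B] [Fintype Y]
    (M : B × Y → Matrix (Fin d) (Fin d) ℂ)
    (hpsd : ∀ p, (M p).PosSemidef)
    (hnorm : ∀ y : Y, ∑ b : B, M (b, y) = 1) :
    IsClassicalMulti M ↔
      ∃ (n : ℕ) (G : Fin n → Matrix (Fin d) (Fin d) ℂ) (D : Fin n → B × Y → ℝ),
        (∀ μ, (G μ).PosSemidef) ∧ (∑ μ, G μ = 1) ∧
        (∀ μ, D μ ∈ (multiPolytope M).extremePoints ℝ) ∧
        (∀ b : B, ∀ y : Y, M (b, y) = ∑ μ, D μ (b, y) • G μ) :=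
  classical_iff_extreme_point_decomposition_general M
end
end

section
/- Let d ≥ 1 and let ρ be a set of states on ℂ^d indexed by a finite set A. Then ρ is classical if and only if there exist a finite index set Λ', positive semidefinite d×d matrices σ̃'_μ, and points D_μ which are extreme points of the noncontextual preparation-assignment polytope 𝕢_ρ (i.e. D_μ ∈ 𝕢_ρ and whenever D_μ lies strictly between two points of 𝕢_ρ both of them equal D_μ), such that ρ_a = ∑_{μ∈Λ'} D_μ(a) • σ̃'_μ for all a ∈ A. -/
open Matrix BigOperators
open scoped ComplexOrder

noncomputable section

/-- The noncontextual preparation-assignment polytope of a set of states. -/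
def statesPolytope {d : ℕ} {A : Type*} [Fintype A]
    (ρ : A → Matrix (Fin d) (Fin d) ℂ) : Set (A → ℝ) :=
  {q | (∀ a, 0 ≤ q a) ∧ (∑ a : A, q a = 1) ∧
    ∀ α : A → ℝ, (∑ a : A, α a • ρ a = 0) → (∑ a : A, α a * q a = 0)}

/-- A set of states is classical. -/
def IsClassicalStates {d : ℕ} {A : Type*} [Fintype A]
    (ρ : A → Matrix (Fin d) (Fin d) ℂ) : Prop :=
  ∃ (n : ℕ) (σ : Fin n → Matrix (Fin d) (Fin d) ℂ) (q : Fin n → A → ℝ),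
    (∀ l, (σ l).PosSemidef) ∧
    (∀ l, q l ∈ statesPolytope ρ) ∧
    (∀ a : A, ρ a = ∑ l, q l a • σ l)

/-!
`statesPolytope ρ` is the slice of the standard simplex by the subspace annihilated by all real
linear relations among the `ρ a`. An extreme point of such a slice is determined by its support,
so there are finitely many, and by Krein–Milman the slice is their convex hull. Writing each `q l`
of a classical decomposition as a convex combination `∑ μ, w l μ • D μ` of extreme points and
collecting terms gives the decomposition `ρ a = ∑ μ, D μ a • (∑ l, w l μ • σ l)`, whose operators
are again positive semidefinite. Conversely, extreme points lie in the polytope.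
-/

open Filter Topology

section StdSimplexInter

variable {A : Type*} [Fintype A] {V : Submodule ℝ (A → ℝ)}

lemma eventually_nonneg_add_smul_sub {p q : A → ℝ} (hp : 0 ≤ p)
    (hq : ∀ a, p a = 0 → q a = 0) : ∀ᶠ t in 𝓝 (0 : ℝ), 0 ≤ p + t • (q - p) := by
  simp only [Pi.le_def, Pi.add_apply, Pi.smul_apply, Pi.sub_apply, Pi.zero_apply, smul_eq_mul]
  refine eventually_all.2 fun a => ?_
  rcases (hp a).eq_or_lt with hpa | hpa
  · exact Eventually.of_forall fun t => by simp [← hpa, hq a hpa.symm]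
  · have hcont : Continuous fun t : ℝ => p a + t * (q a - p a) := by fun_prop
    exact (hcont.tendsto' 0 (p a) (by simp)).eventually (eventually_ge_nhds hpa)

lemma add_smul_sub_mem_stdSimplex_inter {p q : A → ℝ} (hp : p ∈ stdSimplex ℝ A ∩ V)
    (hq : q ∈ stdSimplex ℝ A ∩ V) {t : ℝ} (ht : 0 ≤ p + t • (q - p)) :
    p + t • (q - p) ∈ stdSimplex ℝ A ∩ V := by
  refine ⟨⟨ht, ?_⟩, V.add_mem hp.2 (V.smul_mem t (V.sub_mem hq.2 hp.2))⟩
  simp [Finset.sum_add_distrib, ← Finset.mul_sum, hp.1.2, hq.1.2]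

lemma eq_of_mem_extremePoints_stdSimplex_inter {p q : A → ℝ}
    (hp : p ∈ (stdSimplex ℝ A ∩ V).extremePoints ℝ) (hq : q ∈ stdSimplex ℝ A ∩ V)
    (hsupp : ∀ a, p a = 0 → q a = 0) : q = p := by
  -- `p` is the midpoint of `p ± t • (q - p)`, and both stay in the slice for small `t > 0`.
  have hnonneg := eventually_nonneg_add_smul_sub hp.1.1.1 hsupp
  have hnonneg' := (continuous_neg.tendsto' (0 : ℝ) 0 neg_zero).eventually hnonneg
  obtain ⟨t, ⟨hplus, hminus⟩, ht⟩ :=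
    ((hnonneg.and hnonneg').filter_mono nhdsWithin_le_nhds |>.and self_mem_nhdsWithin).exists
      (f := 𝓝[>] (0 : ℝ))
  have hseg : p ∈ openSegment ℝ (p + t • (q - p)) (p + (-t) • (q - p)) :=
    ⟨1 / 2, 1 / 2, by norm_num, by norm_num, by norm_num, by module⟩
  have hfix := hp.2 (add_smul_sub_mem_stdSimplex_inter hp.1 hq hplus)
    (add_smul_sub_mem_stdSimplex_inter hp.1 hq hminus) hseg
  rw [add_eq_left, smul_eq_zero, sub_eq_zero] at hfix
  exact hfix.resolve_left (ne_of_gt ht)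

lemma finite_extremePoints_stdSimplex_inter : ((stdSimplex ℝ A ∩ V).extremePoints ℝ).Finite := by
  refine Set.Finite.of_finite_image (f := Function.support) (Set.toFinite _)
    fun p hp q hq hpq => eq_of_mem_extremePoints_stdSimplex_inter hq hp.1 fun a ha => ?_
  simpa using (Set.ext_iff.1 hpq a).not.2 (by simpa using ha)

lemma convexHull_extremePoints_stdSimplex_inter :
    convexHull ℝ ((stdSimplex ℝ A ∩ V).extremePoints ℝ) = stdSimplex ℝ A ∩ V := by
  have hK := isCompact_stdSimplex ℝ A |>.inter_right V.closed_of_finiteDimensional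
  have hclosed := (finite_extremePoints_stdSimplex_inter (V := V)).isClosed_convexHull (𝕜 := ℝ)
  rw [← hclosed.closure_eq]
  exact closure_convexHull_extremePoints hK ((convex_stdSimplex ℝ A).inter V.convex)

end StdSimplexInter

def relationsAnnihilator {A M : Type*} [Fintype A] [AddCommGroup M] [Module ℝ M] (v : A → M) :
    Submodule ℝ (A → ℝ) where
  carrier := {q | ∀ α : A → ℝ, ∑ a, α a • v a = 0 → ∑ a, α a * q a = 0}
  add_mem' hq hq' α hα := by simp [mul_add, Finset.sum_add_distrib, hq α hα, hq' α hα]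
  zero_mem' := by simp
  smul_mem' c q hq α hα := by simp [mul_left_comm _ c, ← Finset.mul_sum, hq α hα]

lemma statesPolytope_eq_stdSimplex_inter {d : ℕ} {A : Type*} [Fintype A]
    (ρ : A → Matrix (Fin d) (Fin d) ℂ) :
    statesPolytope ρ = stdSimplex ℝ A ∩ relationsAnnihilator ρ := by
  ext q
  exact and_assoc.symm

def HasPSDDecomposition {m A : Type*} (S : Set (A → ℝ))
    (ρ : A → Matrix m m ℂ) : Prop :=
  ∃ (n : ℕ) (σ : Fin n → Matrix m m ℂ) (D : Fin n → A → ℝ),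
    (∀ μ, (σ μ).PosSemidef) ∧ (∀ μ, D μ ∈ S) ∧ ∀ a, ρ a = ∑ μ, D μ a • σ μ

namespace HasPSDDecomposition

variable {m A : Type*} {ρ : A → Matrix m m ℂ} {S : Set (A → ℝ)}

lemma mono {T : Set (A → ℝ)} (hST : S ⊆ T) : HasPSDDecomposition S ρ → HasPSDDecomposition T ρ :=
  fun ⟨n, σ, D, hσ, hD, hρ⟩ => ⟨n, σ, D, hσ, fun μ => hST (hD μ), hρ⟩

lemma of_subset_convexHull {T : Finset (A → ℝ)} (hST : S ⊆ convexHull ℝ ↑T)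
    (h : HasPSDDecomposition S ρ) : HasPSDDecomposition ↑T ρ := by
  obtain ⟨n, σ, q, hσ, hq, hρ⟩ := h
  choose w hw _ hwq using fun l => Finset.mem_convexHull'.1 (hST (hq l))
  let e := T.equivFin.symm
  refine ⟨T.card, fun μ => ∑ l, w l (e μ) • σ l, fun μ => e μ,
    fun μ => posSemidef_sum _ fun l _ => (hσ l).smul (hw l _ (e μ).2), fun μ => (e μ).2,
    fun a => ?_⟩
  calc ρ a = ∑ l, q l a • σ l := hρ a
    _ = ∑ l, ∑ y ∈ T, (w l y * y a) • σ l := by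
      simp only [← hwq, Finset.sum_apply, Pi.smul_apply, smul_eq_mul, Finset.sum_smul]
    _ = ∑ y ∈ T, y a • ∑ l, w l y • σ l := by
      rw [Finset.sum_comm]
      simp only [Finset.smul_sum, smul_smul, mul_comm]
    _ = ∑ μ, (e μ : A → ℝ) a • ∑ l, w l (e μ) • σ l := by
      rw [← Finset.sum_coe_sort T, ← e.sum_comp]

end HasPSDDecomposition

theorem classicalStates_iff_extreme_point_decomposition_general
    {d : ℕ} {A : Type*} [Fintype A]
    (ρ : A → Matrix (Fin d) (Fin d) ℂ) :
    IsClassicalStates ρ ↔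
      ∃ (n : ℕ) (σ : Fin n → Matrix (Fin d) (Fin d) ℂ) (D : Fin n → A → ℝ),
        (∀ μ, (σ μ).PosSemidef) ∧
        (∀ μ, D μ ∈ (statesPolytope ρ).extremePoints ℝ) ∧
        (∀ a : A, ρ a = ∑ μ, D μ a • σ μ) := by
  change HasPSDDecomposition _ ρ ↔ HasPSDDecomposition _ ρ
  rw [statesPolytope_eq_stdSimplex_inter]
  have hfin := finite_extremePoints_stdSimplex_inter (V := relationsAnnihilator ρ)
  refine ⟨fun h => ?_, HasPSDDecomposition.mono extremePoints_subset⟩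
  simpa using h.of_subset_convexHull (T := hfin.toFinset)
    (by rw [hfin.coe_toFinset, convexHull_extremePoints_stdSimplex_inter])

theorem classicalStates_iff_extreme_point_decomposition
    {d : ℕ} (hd : 1 ≤ d) {A : Type*} [Fintype A]
    (ρ : A → Matrix (Fin d) (Fin d) ℂ)
    (hpsd : ∀ a, (ρ a).PosSemidef)
    (htr : ∀ a, (ρ a).trace = 1) :
    IsClassicalStates ρ ↔
      ∃ (n : ℕ) (σ : Fin n → Matrix (Fin d) (Fin d) ℂ) (D : Fin n → A → ℝ),
        (∀ μ, (σ μ).PosSemidef) ∧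
        (∀ μ, D μ ∈ (statesPolytope ρ).extremePoints ℝ) ∧
        (∀ a : A, ρ a = ∑ μ, D μ a • σ μ) :=
  classicalStates_iff_extreme_point_decomposition_general ρ
end
end

section
/- Let d ≥ 1 and let M be a multi-measurement on ℂ^d with finite outcome set B and nonempty finite setting set Y. Then M is classical (as a multi-measurement) if and only if its flag-convexification M̃ — the single measurement on outcome set B × Y defined by M̃(b,y) := (1/|Y|) • M_{b|y} — is classical (as a single measurement). -/
open Matrix BigOperators
open scoped ComplexOrder

noncomputable section

/-- The noncontextual measurement-assignment polytope of a single measurement (POVM). -/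
def povmPolytope {d : ℕ} {C : Type*} [Fintype C]
    (N : C → Matrix (Fin d) (Fin d) ℂ) : Set (C → ℝ) :=
  {q | (∀ c, 0 ≤ q c) ∧ (∑ c : C, q c = 1) ∧
    ∀ β : C → ℝ, (∑ c : C, β c • N c = 0) → (∑ c : C, β c * q c = 0)}

/-- A single measurement (POVM) is classical. -/
def IsClassicalPOVM {d : ℕ} {C : Type*} [Fintype C]
    (N : C → Matrix (Fin d) (Fin d) ℂ) : Prop :=
  ∃ (n : ℕ) (G : Fin n → Matrix (Fin d) (Fin d) ℂ) (q : Fin n → C → ℝ),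
    (∀ l, (G l).PosSemidef) ∧ (∑ l, G l = 1) ∧
    (∀ l, q l ∈ povmPolytope N) ∧
    (∀ c : C, N c = ∑ l, q l c • G l)

theorem classicalMulti_iff_classical_flag_convexification
    {d : ℕ} (hd : 1 ≤ d) {B Y : Type*} [Fintype B] [Fintype Y] [Nonempty Y]
    (M : B × Y → Matrix (Fin d) (Fin d) ℂ)
    (hpsd : ∀ p, (M p).PosSemidef)
    (hnorm : ∀ y : Y, ∑ b : B, M (b, y) = 1) :
    IsClassicalMulti M ↔
      IsClassicalPOVM (fun p : B × Y => ((Fintype.card Y : ℝ)⁻¹) • M p) := by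
  classical
  set k : ℝ := (Fintype.card Y : ℝ) with hk_def
  have hkpos : 0 < k := by
    have := Fintype.card_pos (α := Y)
    rw [hk_def]; exact_mod_cast this
  have hk0 : k ≠ 0 := ne_of_gt hkpos
  have hMsum : ∑ p : B × Y, M p = (Fintype.card Y : ℕ) • (1 : Matrix (Fin d) (Fin d) ℂ) := by
    rw [Fintype.sum_prod_type, Finset.sum_comm]
    simp [hnorm, Finset.card_univ]
  constructor
  · rintro ⟨n, G, q, hG, hGsum, hq, hM⟩
    refine ⟨n, G, fun l p => k⁻¹ * q l p, hG, hGsum, ?_, ?_⟩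
    · intro l
      obtain ⟨h1, h2, h3⟩ := hq l
      refine ⟨fun p => mul_nonneg (inv_nonneg.2 hkpos.le) (h1 p), ?_, ?_⟩
      · rw [← Finset.mul_sum]
        have hs : ∑ p : B × Y, q l p = k := by
          rw [Fintype.sum_prod_type, Finset.sum_comm]
          simp [h2, Finset.card_univ, hk_def]
        rw [hs, inv_mul_cancel₀ hk0]
      · intro β hβ
        have hβ' : ∑ p : B × Y, (k⁻¹ * β p) • M p = 0 := by
          have : ∀ p : B × Y, (k⁻¹ * β p) • M p = β p • (k⁻¹ • M p) := fun p => by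
            rw [smul_smul, mul_comm]
          simpa [this] using hβ
        have := h3 _ hβ'
        have he : ∑ p : B × Y, β p * (k⁻¹ * q l p)
            = ∑ p : B × Y, (k⁻¹ * β p) * q l p :=
          Finset.sum_congr rfl fun p _ => by ring
        rw [he]; exact this
    · intro p
      show k⁻¹ • M p = _
      obtain ⟨b, y⟩ := p
      rw [hM b y, Finset.smul_sum]
      exact Finset.sum_congr rfl fun l _ => (smul_smul _ _ _)
  · rintro ⟨n, G, r, hG, hGsum, hr, hN⟩
    refine ⟨n, G, fun l p => k * r l p, hG, hGsum, ?_, ?_⟩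
    · intro l
      obtain ⟨h1, h2, h3⟩ := hr l
      refine ⟨fun p => mul_nonneg hkpos.le (h1 p), ?_, ?_⟩
      · intro y
        -- use the linear relation to show the marginal is right
        have e1 : ∑ p : B × Y, ((if p.2 = y then k else 0 : ℝ)) • ((k⁻¹ : ℝ) • M p)
            = (1 : Matrix (Fin d) (Fin d) ℂ) := by
          have : ∀ p : B × Y, ((if p.2 = y then k else 0 : ℝ)) • ((k⁻¹ : ℝ) • M p)
              = if p.2 = y then M p else 0 := fun p => by
            split <;> simp [smul_smul, mul_inv_cancel₀ hk0]
          rw [Finset.sum_congr rfl fun p _ => this p, Fintype.sum_prod_type]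
          simp only [Finset.sum_ite_eq', Finset.mem_univ, if_true]
          exact hnorm y
        have e2 : ∑ p : B × Y, (1 : ℝ) • ((k⁻¹ : ℝ) • M p)
            = (1 : Matrix (Fin d) (Fin d) ℂ) := by
          simp only [one_smul, ← Finset.smul_sum, hMsum]
          rw [← Nat.cast_smul_eq_nsmul ℝ, smul_smul, inv_mul_cancel₀ hk0, one_smul]
        have hβ : ∑ p : B × Y, ((if p.2 = y then k else 0 : ℝ) - 1) • ((k⁻¹ : ℝ) • M p)
            = 0 := by
          simp only [sub_smul, Finset.sum_sub_distrib, e1, e2, sub_self]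
        have hlin := h3 _ hβ
        simp only [sub_mul, one_mul, Finset.sum_sub_distrib, h2] at hlin
        have hsum : ∑ p : B × Y, (if p.2 = y then k else 0 : ℝ) * r l p
            = ∑ b : B, k * r l (b, y) := by
          rw [Fintype.sum_prod_type]
          have : ∀ b : B, ∑ y' : Y, (if y' = y then k else 0 : ℝ) * r l (b, y')
              = k * r l (b, y) := fun b => by
            rw [Finset.sum_eq_single y]
            · simp
            · intro y' _ hy'; simp [hy']
            · intro h; exact absurd (Finset.mem_univ y) h
          exact Finset.sum_congr rfl fun b _ => this b
        rw [hsum] at hlin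
        linarith
      · intro β hβ
        have hβ' : ∑ p : B × Y, (k * β p) • ((k⁻¹ : ℝ) • M p) = 0 := by
          have : ∀ p : B × Y, (k * β p) • ((k⁻¹ : ℝ) • M p) = β p • M p := fun p => by
            rw [smul_smul, mul_comm k (β p), mul_assoc, mul_inv_cancel₀ hk0, mul_one]
          rw [Finset.sum_congr rfl fun p _ => this p]
          exact hβ
        have := h3 _ hβ'
        have he : ∑ p : B × Y, β p * (k * r l p)
            = ∑ p : B × Y, (k * β p) * r l p :=
          Finset.sum_congr rfl fun p _ => by ring
        rw [he]; exact this
    · intro b y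
      have h := hN (b, y)
      simp only at h
      have hself : M (b, y) = k • ((k⁻¹ : ℝ) • M (b, y)) := by
        rw [smul_smul, mul_inv_cancel₀ hk0, one_smul]
      rw [hself, h, Finset.smul_sum]
      exact Finset.sum_congr rfl fun l _ => (smul_smul _ _ _)
end
end

section
/- Let d ≥ 1 and let M be a multi-measurement on ℂ^d with finite outcome set B and nonempty finite setting set Y. For η ∈ [0,1] define the noisy multi-measurement M^η by M^η_{b|y} := η • M_{b|y} + (1−η) • (Tr(M_{b|y})/d) • 1, and define the noisy flag-convexification (M̃)^η, a single measurement on outcome set B × Y, by (M̃)^η(b,y) := η • (1/|Y|) M_{b|y} + (1−η) • (Tr((1/|Y|)M_{b|y})/d) • 1. Then for every η ∈ [0,1], M^η is classical (as a multi-measurement) if and only if (M̃)^η is classical (as a single measurement); hence {η ∈ [0,1] : M^η is classical} = {η ∈ [0,1] : (M̃)^η is classical}, i.e. the white-noise robustness of a multi-measurement coincides with that of its flag-convexification. -/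
open Matrix BigOperators
open scoped ComplexOrder

noncomputable section

/-- The noisy version of a multi-measurement: each effect is mixed with white noise. -/
def noisyMulti {d : ℕ} {B Y : Type*} [Fintype B] [Fintype Y]
    (M : B × Y → Matrix (Fin d) (Fin d) ℂ) (η : ℝ) :
    B × Y → Matrix (Fin d) (Fin d) ℂ :=
  fun p => η • M p + (1 - η) • (((M p).trace / (d : ℂ)) • (1 : Matrix (Fin d) (Fin d) ℂ))

/-- The noisy flag-convexification of a multi-measurement, a single measurement
on the outcome set `B × Y`. -/
def noisyFlag {d : ℕ} {B Y : Type*} [Fintype B] [Fintype Y]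
    (M : B × Y → Matrix (Fin d) (Fin d) ℂ) (η : ℝ) :
    B × Y → Matrix (Fin d) (Fin d) ℂ :=
  fun p => η • (((Fintype.card Y : ℝ)⁻¹) • M p) +
    (1 - η) • (((((Fintype.card Y : ℝ)⁻¹) • M p).trace / (d : ℂ)) •
      (1 : Matrix (Fin d) (Fin d) ℂ))

lemma key_scaling {d : ℕ} {B Y : Type*} [Fintype B] [Fintype Y] [Nonempty Y]
    (M' : B × Y → Matrix (Fin d) (Fin d) ℂ)
    (hM'norm : ∀ y : Y, ∑ b : B, M' (b, y) = 1) :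
    IsClassicalMulti M' ↔
      IsClassicalPOVM (fun p => ((Fintype.card Y : ℝ)⁻¹) • M' p) := by
  set k : ℝ := (Fintype.card Y : ℝ) with hkdef
  have hkpos : 0 < k := by
    rw [hkdef]; exact_mod_cast Fintype.card_pos (α := Y)
  have hkne : k ≠ 0 := ne_of_gt hkpos
  constructor
  · rintro ⟨n, G, q, hG, hG1, hq, hrep⟩
    refine ⟨n, G, fun l p => k⁻¹ * q l p, hG, hG1, fun l => ⟨?_, ?_, ?_⟩, ?_⟩
    · intro c; exact mul_nonneg (inv_nonneg.2 hkpos.le) ((hq l).1 c)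
    · rw [← Finset.mul_sum, Fintype.sum_prod_type_right]
      rw [Finset.sum_congr rfl fun y _ => (hq l).2.1 y]
      simp [hkdef, hkne]
    · intro β hβ
      have h2 : ∑ p : B × Y, (β p * k⁻¹) • M' p = 0 := by
        simpa [smul_smul] using hβ
      have h3 := (hq l).2.2 _ h2
      calc ∑ p : B × Y, β p * (k⁻¹ * q l p)
          = ∑ p : B × Y, (β p * k⁻¹) * q l p := by
            exact Finset.sum_congr rfl fun p _ => by ring
        _ = 0 := h3
    · intro c
      simp only
      rw [hrep c.1 c.2, Finset.smul_sum]
      exact Finset.sum_congr rfl fun l _ => smul_smul k⁻¹ (q l c) (G l)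
  · rintro ⟨n, G, r, hG, hG1, hr, hrep⟩
    have hNtot : ∑ p : B × Y, (k⁻¹ : ℝ) • M' p = 1 := by
      rw [Fintype.sum_prod_type_right]
      have : ∀ y : Y, ∑ b : B, (k⁻¹ : ℝ) • M' (b, y) = (k⁻¹ : ℝ) • (1 : Matrix (Fin d) (Fin d) ℂ) := by
        intro y; rw [← Finset.smul_sum, hM'norm y]
      rw [Finset.sum_congr rfl fun y _ => this y, Finset.sum_const, Finset.card_univ,
        ← Nat.cast_smul_eq_nsmul ℝ, smul_smul, ← hkdef, mul_inv_cancel₀ hkne, one_smul]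
    have hry : ∀ l (y : Y), ∑ b : B, r l (b, y) = k⁻¹ := by
      classical
      intro l y
      have hβ : ∑ p : B × Y, ((if p.2 = y then (1:ℝ) else 0) - k⁻¹) • ((k⁻¹ : ℝ) • M' p) = 0 := by
        simp only [sub_smul, Finset.sum_sub_distrib]
        have h1 : ∑ p : B × Y, (if p.2 = y then (1:ℝ) else 0) • ((k⁻¹ : ℝ) • M' p)
            = (k⁻¹ : ℝ) • (1 : Matrix (Fin d) (Fin d) ℂ) := by
          rw [Fintype.sum_prod_type_right]
          have heach : ∀ y' : Y, ∑ b : B, (if y' = y then (1:ℝ) else 0) • ((k⁻¹ : ℝ) • M' (b, y'))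
              = if y' = y then (k⁻¹ : ℝ) • (1 : Matrix (Fin d) (Fin d) ℂ) else 0 := by
            intro y'; by_cases h : y' = y <;> simp [h, ← Finset.smul_sum, hM'norm]
          rw [Finset.sum_congr rfl fun y' _ => heach y',
            Finset.sum_ite_eq' Finset.univ y, if_pos (Finset.mem_univ y)]
        have h2 : ∑ p : B × Y, (k⁻¹ : ℝ) • ((k⁻¹ : ℝ) • M' p) = (k⁻¹ : ℝ) • (1 : Matrix (Fin d) (Fin d) ℂ) := by
          rw [← Finset.smul_sum, hNtot]
        rw [h1, h2, sub_self]
      have h3 := (hr l).2.2 _ hβ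
      have h4 : ∑ p : B × Y, ((if p.2 = y then (1:ℝ) else 0) - k⁻¹) * r l p
          = (∑ b : B, r l (b, y)) - k⁻¹ := by
        simp only [sub_mul, Finset.sum_sub_distrib]
        congr 1
        · rw [Fintype.sum_prod_type_right]
          have heach : ∀ y' : Y, ∑ b : B, (if y' = y then (1:ℝ) else 0) * r l (b, y')
              = if y' = y then ∑ b : B, r l (b, y') else 0 := by
            intro y'; by_cases h : y' = y <;> simp [h]
          rw [Finset.sum_congr rfl fun y' _ => heach y',
            Finset.sum_ite_eq' Finset.univ y, if_pos (Finset.mem_univ y)]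
        · rw [← Finset.mul_sum, (hr l).2.1, mul_one]
      rw [h4] at h3; linarith
    refine ⟨n, G, fun l p => k * r l p, hG, hG1, fun l => ⟨?_, ?_, ?_⟩, ?_⟩
    · intro p; exact mul_nonneg hkpos.le ((hr l).1 p)
    · intro y
      rw [← Finset.mul_sum, hry l y, mul_inv_cancel₀ hkne]
    · intro β hβ
      have h2 : ∑ p : B × Y, (k * β p) • ((k⁻¹ : ℝ) • M' p) = 0 := by
        have : ∀ p : B × Y, (k * β p) • ((k⁻¹ : ℝ) • M' p) = β p • M' p := by
          intro p; rw [smul_smul, mul_assoc, mul_comm (β p), ← mul_assoc,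
            mul_inv_cancel₀ hkne, one_mul]
        rw [Finset.sum_congr rfl fun p _ => this p]; exact hβ
      have h3 := (hr l).2.2 _ h2
      calc ∑ p : B × Y, β p * (k * r l p)
          = ∑ p : B × Y, (k * β p) * r l p := by
            exact Finset.sum_congr rfl fun p _ => by ring
        _ = 0 := h3
    · intro b y
      have h := hrep (b, y)
      simp only at h
      have hMk : M' (b, y) = k • ((k⁻¹ : ℝ) • M' (b, y)) := by
        rw [smul_smul, mul_inv_cancel₀ hkne, one_smul]
      rw [hMk, h, Finset.smul_sum]
      exact Finset.sum_congr rfl fun l _ => smul_smul k (r l (b, y)) (G l)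

lemma noisyMulti_norm {d : ℕ} (hd : 1 ≤ d) {B Y : Type*} [Fintype B] [Fintype Y]
    (M : B × Y → Matrix (Fin d) (Fin d) ℂ)
    (hnorm : ∀ y : Y, ∑ b : B, M (b, y) = 1) (η : ℝ) :
    ∀ y : Y, ∑ b : B, noisyMulti M η (b, y) = 1 := by
  intro y
  have hdne : (d : ℂ) ≠ 0 := Nat.cast_ne_zero.2 (by omega)
  have h1 : ∑ b : B, ((M (b, y)).trace / (d : ℂ)) • (1 : Matrix (Fin d) (Fin d) ℂ)
      = (1 : Matrix (Fin d) (Fin d) ℂ) := by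
    rw [← Finset.sum_smul, ← Finset.sum_div, ← Matrix.trace_sum, hnorm y,
      Matrix.trace_one, Fintype.card_fin, div_self hdne, one_smul]
  simp only [noisyMulti, Finset.sum_add_distrib, ← Finset.smul_sum, hnorm y, h1]
  rw [← add_smul]
  norm_num

lemma noisyFlag_eq {d : ℕ} {B Y : Type*} [Fintype B] [Fintype Y]
    (M : B × Y → Matrix (Fin d) (Fin d) ℂ) (η : ℝ) :
    noisyFlag M η = fun p => ((Fintype.card Y : ℝ)⁻¹) • noisyMulti M η p := by
  funext p
  ext i j
  simp only [noisyFlag, noisyMulti, smul_add, Matrix.trace_smul, Matrix.add_apply,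
    Matrix.smul_apply, Matrix.one_apply, smul_eq_mul, Complex.real_smul]
  by_cases h : i = j <;> simp [h] <;> ring

theorem white_noise_robustness_invariant_under_flag_convexification
    {d : ℕ} (hd : 1 ≤ d) {B Y : Type*} [Fintype B] [Fintype Y] [Nonempty Y]
    (M : B × Y → Matrix (Fin d) (Fin d) ℂ)
    (hpsd : ∀ p, (M p).PosSemidef)
    (hnorm : ∀ y : Y, ∑ b : B, M (b, y) = 1) :
    (∀ η ∈ Set.Icc (0 : ℝ) 1,
        (IsClassicalMulti (noisyMulti M η) ↔ IsClassicalPOVM (noisyFlag M η))) ∧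
      {η ∈ Set.Icc (0 : ℝ) 1 | IsClassicalMulti (noisyMulti M η)} =
        {η ∈ Set.Icc (0 : ℝ) 1 | IsClassicalPOVM (noisyFlag M η)} := by
  have hmain : ∀ η : ℝ,
      IsClassicalMulti (noisyMulti M η) ↔ IsClassicalPOVM (noisyFlag M η) := by
    intro η
    rw [noisyFlag_eq M η]
    exact key_scaling (noisyMulti M η) (noisyMulti_norm hd M hnorm η)
  refine ⟨fun η _ => hmain η, ?_⟩
  ext η
  simp only [Set.mem_setOf_eq]
  exact and_congr_right fun _ => hmain η
end
end

section
/- Let d ≥ 1, let M be a multi-measurement on ℂ^d with finite outcome set B and nonempty finite setting set Y, and let M̃ be its flag-convexification, the single measurement on outcome set B × Y given by M̃(b,y) := (1/|Y|) • M_{b|y}. Then for every ω ∈ [0,1], the following are equivalent: (i) there exist multi-measurements N and K on ℂ^d with the same outcome and setting sets such that M_{b|y} = ω • N_{b|y} + (1−ω) • K_{b|y} for all b,y, such that for every β : B × Y → ℝ with ∑_{b,y} β(b,y) • M_{b|y} = 0 one has ∑_{b,y} β(b,y) • N_{b|y} = 0 and ∑_{b,y} β(b,y) • K_{b|y} = 0,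 and such that K is classical (as a multi-measurement); (ii) there exist single measurements Ñ and K̃ on outcome set B × Y such that M̃(b,y) = ω • Ñ(b,y) + (1−ω) • K̃(b,y) for all b,y, such that for every β : B × Y → ℝ with ∑_{b,y} β(b,y) • M̃(b,y) = 0 one has ∑_{b,y} β(b,y) • Ñ(b,y) = 0 and ∑_{b,y} β(b,y) • K̃(b,y) = 0, and such that K̃ is classical (as a single measurement). Consequently, the nonclassical fraction (the infimum of such ω) of M equals that of M̃. -/
open Matrix BigOperators
open scoped ComplexOrder

noncomputable section

/-- Condition (i): the given multi-measurement `M` admits an `ω`-weighted decomposition into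
an arbitrary multi-measurement and a classical multi-measurement, both satisfying the same
operational identities as `M`. -/
def MultiDecomp {d : ℕ} {B Y : Type*} [Fintype B] [Fintype Y]
    (M : B × Y → Matrix (Fin d) (Fin d) ℂ) (ω : ℝ) : Prop :=
  ∃ N K : B × Y → Matrix (Fin d) (Fin d) ℂ,
    (∀ p, (N p).PosSemidef) ∧ (∀ y : Y, ∑ b : B, N (b, y) = 1) ∧
    (∀ p, (K p).PosSemidef) ∧ (∀ y : Y, ∑ b : B, K (b, y) = 1) ∧
    (∀ p, M p = ω • N p + (1 - ω) • K p) ∧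
    (∀ β : B × Y → ℝ, (∑ p : B × Y, β p • M p = 0) →
      (∑ p : B × Y, β p • N p = 0) ∧ (∑ p : B × Y, β p • K p = 0)) ∧
    IsClassicalMulti K

/-- Condition (ii): the flag-convexification `M̃` admits an `ω`-weighted decomposition into
an arbitrary single measurement and a classical single measurement, both satisfying the same
operational identities as `M̃`. -/
def SingleDecomp {d : ℕ} {C : Type*} [Fintype C]
    (N : C → Matrix (Fin d) (Fin d) ℂ) (ω : ℝ) : Prop :=
  ∃ N' K' : C → Matrix (Fin d) (Fin d) ℂ,
    (∀ c, (N' c).PosSemidef) ∧ (∑ c : C, N' c = 1) ∧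
    (∀ c, (K' c).PosSemidef) ∧ (∑ c : C, K' c = 1) ∧
    (∀ c, N c = ω • N' c + (1 - ω) • K' c) ∧
    (∀ β : C → ℝ, (∑ c : C, β c • N c = 0) →
      (∑ c : C, β c • N' c = 0) ∧ (∑ c : C, β c • K' c = 0)) ∧
    IsClassicalPOVM K'

/-!
Averaging the settings, `M̃ = |Y|⁻¹ • M`, is undone by multiplying by `|Y|`; both scalings
preserve positivity and all linear identities, and the response functions `q_λ` of a classical
model scale along with the measurement. The only information lost in passing to `M̃` is
that each setting of `M` sums to `1`; but "all settings have the same sum" is itself a linear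
identity of `M̃` (with coefficients `𝟙[y = y₁] - 𝟙[y = y₂]`), so every operator family or
assignment respecting the identities of `M̃` also has equal setting sums, and the total
normalisation then pins each of them to `|Y|⁻¹`.
-/

section SettingSums

variable {B Y V W : Type*} [Fintype B] [Fintype Y]
  [AddCommGroup V] [Module ℝ V] [AddCommGroup W] [Module ℝ W]

lemma sum_smul_smul_eq_zero_iff {ι : Type*} [Fintype ι] (β : ι → ℝ) (X : ι → V) {e : ℝ}
    (he : e ≠ 0) : ∑ i, β i • (e • X) i = 0 ↔ ∑ i, β i • X i = 0 := by
  simp only [Pi.smul_apply, smul_comm (β _) e, ← Finset.smul_sum, smul_eq_zero_iff_right he]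

lemma sum_prod_eq_card_smul {T : B × Y → V} {v : V} (hT : ∀ y, ∑ b, T (b, y) = v) :
    ∑ p, T p = (Fintype.card Y : ℝ) • v := by
  simp only [Fintype.sum_prod_type_right, hT, Finset.sum_const, Finset.card_univ,
    Nat.cast_smul_eq_nsmul]

lemma sum_inv_card_smul_eq [Nonempty Y] {T : B × Y → V} {v : V}
    (hT : ∀ y, ∑ b, T (b, y) = v) : ∑ p, ((Fintype.card Y : ℝ)⁻¹ • T) p = v := by
  have hY : (Fintype.card Y : ℝ) ≠ 0 := Nat.cast_ne_zero.mpr Fintype.card_ne_zero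
  simp only [Pi.smul_apply, ← Finset.smul_sum, sum_prod_eq_card_smul hT, smul_smul,
    inv_mul_cancel₀ hY, one_smul]

lemma sum_card_smul_eq_sum {T : B × Y → V}
    (hT : ∀ y₁ y₂, ∑ b, T (b, y₁) = ∑ b, T (b, y₂)) (y : Y) :
    ∑ b, ((Fintype.card Y : ℝ) • T) (b, y) = ∑ p, T p := by
  simp only [Pi.smul_apply, ← Finset.smul_sum, sum_prod_eq_card_smul (fun y' => hT y' y)]

lemma sum_ite_sub_ite_smul [DecidableEq Y] (X : B × Y → V) (y₁ y₂ : Y) :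
    ∑ p : B × Y, ((if p.2 = y₁ then (1 : ℝ) else 0) - if p.2 = y₂ then 1 else 0) • X p =
      ∑ b, X (b, y₁) - ∑ b, X (b, y₂) := by
  simp [Fintype.sum_prod_type, sub_smul, ite_smul, Finset.sum_sub_distrib]

lemma setting_sums_eq_of_identities {X : B × Y → V} {Z : B × Y → W}
    (hXZ : ∀ β : B × Y → ℝ, ∑ p, β p • X p = 0 → ∑ p, β p • Z p = 0)
    (hX : ∀ y₁ y₂, ∑ b, X (b, y₁) = ∑ b, X (b, y₂)) (y₁ y₂ : Y) :
    ∑ b, Z (b, y₁) = ∑ b, Z (b, y₂) := by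
  classical
  have h := hXZ _ ((sum_ite_sub_ite_smul X y₁ y₂).trans (sub_eq_zero.mpr (hX y₁ y₂)))
  rwa [sum_ite_sub_ite_smul, sub_eq_zero] at h

end SettingSums

section Classicality

variable {d : ℕ} {B Y : Type*} [Fintype B] [Fintype Y]

lemma inv_card_smul_mem_povmPolytope [Nonempty Y] {K : B × Y → Matrix (Fin d) (Fin d) ℂ}
    {q : B × Y → ℝ} (hq : q ∈ multiPolytope K) :
    (Fintype.card Y : ℝ)⁻¹ • q ∈ povmPolytope ((Fintype.card Y : ℝ)⁻¹ • K) := by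
  obtain ⟨hq_nonneg, hq_sum, hq_id⟩ := hq
  have hc : (Fintype.card Y : ℝ)⁻¹ ≠ 0 := inv_ne_zero (Nat.cast_ne_zero.mpr Fintype.card_ne_zero)
  refine ⟨fun p => mul_nonneg (inv_nonneg.mpr (Nat.cast_nonneg _)) (hq_nonneg p),
    sum_inv_card_smul_eq hq_sum, fun β hβ => ?_⟩
  exact (sum_smul_smul_eq_zero_iff β q hc).mpr
    (hq_id β ((sum_smul_smul_eq_zero_iff β K hc).mp hβ))

lemma card_smul_mem_multiPolytope [Nonempty Y] {K : B × Y → Matrix (Fin d) (Fin d) ℂ}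
    (hK : ∀ y₁ y₂, ∑ b, K (b, y₁) = ∑ b, K (b, y₂)) {q : B × Y → ℝ}
    (hq : q ∈ povmPolytope K) :
    (Fintype.card Y : ℝ) • q ∈ multiPolytope ((Fintype.card Y : ℝ) • K) := by
  obtain ⟨hq_nonneg, hq_sum, hq_id⟩ := hq
  have hY : (Fintype.card Y : ℝ) ≠ 0 := Nat.cast_ne_zero.mpr Fintype.card_ne_zero
  refine ⟨fun p => mul_nonneg (Nat.cast_nonneg _) (hq_nonneg p),
    fun y => (sum_card_smul_eq_sum (setting_sums_eq_of_identities hq_id hK) y).trans hq_sum,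
    fun β hβ => ?_⟩
  exact (sum_smul_smul_eq_zero_iff β q hY).mpr
    (hq_id β ((sum_smul_smul_eq_zero_iff β K hY).mp hβ))

lemma IsClassicalMulti.inv_card_smul [Nonempty Y] {K : B × Y → Matrix (Fin d) (Fin d) ℂ}
    (hK : IsClassicalMulti K) : IsClassicalPOVM ((Fintype.card Y : ℝ)⁻¹ • K) := by
  obtain ⟨n, G, q, hG, hG_sum, hq, hK_eq⟩ := hK
  refine ⟨n, G, fun l => (Fintype.card Y : ℝ)⁻¹ • q l, hG, hG_sum,
    fun l => inv_card_smul_mem_povmPolytope (hq l), fun ⟨b, y⟩ => ?_⟩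
  simp only [Pi.smul_apply, hK_eq b y, Finset.smul_sum, smul_smul, smul_eq_mul]

lemma IsClassicalPOVM.card_smul [Nonempty Y] {K : B × Y → Matrix (Fin d) (Fin d) ℂ}
    (hK_sums : ∀ y₁ y₂, ∑ b, K (b, y₁) = ∑ b, K (b, y₂)) (hK : IsClassicalPOVM K) :
    IsClassicalMulti ((Fintype.card Y : ℝ) • K) := by
  obtain ⟨n, G, q, hG, hG_sum, hq, hK_eq⟩ := hK
  refine ⟨n, G, fun l => (Fintype.card Y : ℝ) • q l, hG, hG_sum,
    fun l => card_smul_mem_multiPolytope hK_sums (hq l), fun b y => ?_⟩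
  simp only [Pi.smul_apply, hK_eq (b, y), Finset.smul_sum, smul_smul, smul_eq_mul]

end Classicality

section FlagConvexification

variable {d : ℕ} {B Y : Type*} [Fintype B] [Fintype Y] [Nonempty Y]
  {M : B × Y → Matrix (Fin d) (Fin d) ℂ}

lemma MultiDecomp.singleDecomp_inv_card_smul {ω : ℝ} (h : MultiDecomp M ω) :
    SingleDecomp ((Fintype.card Y : ℝ)⁻¹ • M) ω := by
  obtain ⟨N, K, hN, hN_sum, hK, hK_sum, hM_eq, hNK_id, hK_cl⟩ := h
  set c : ℝ := (Fintype.card Y : ℝ)⁻¹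
  have hc : c ≠ 0 := inv_ne_zero (Nat.cast_ne_zero.mpr Fintype.card_ne_zero)
  have hc_nonneg : 0 ≤ c := inv_nonneg.mpr (Nat.cast_nonneg _)
  refine ⟨c • N, c • K, fun p => (hN p).smul hc_nonneg, sum_inv_card_smul_eq hN_sum,
    fun p => (hK p).smul hc_nonneg, sum_inv_card_smul_eq hK_sum, fun p => ?_,
    fun β hβ => ?_, hK_cl.inv_card_smul⟩
  · simp only [Pi.smul_apply, hM_eq p, smul_add, smul_comm c ω, smul_comm c (1 - ω)]
  · exact (hNK_id β ((sum_smul_smul_eq_zero_iff β M hc).mp hβ)).imp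
      (sum_smul_smul_eq_zero_iff β N hc).mpr (sum_smul_smul_eq_zero_iff β K hc).mpr

lemma MultiDecomp.of_singleDecomp_inv_card_smul (hM : ∀ y : Y, ∑ b : B, M (b, y) = 1)
    {ω : ℝ} (h : SingleDecomp ((Fintype.card Y : ℝ)⁻¹ • M) ω) : MultiDecomp M ω := by
  obtain ⟨N, K, hN, hN_sum, hK, hK_sum, hM_eq, hNK_id, hK_cl⟩ := h
  set m : ℝ := (Fintype.card Y : ℝ)
  have hm : m ≠ 0 := Nat.cast_ne_zero.mpr Fintype.card_ne_zero
  have hm_nonneg : 0 ≤ m := Nat.cast_nonneg _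
  have hM_sums : ∀ y₁ y₂ : Y, ∑ b, (m⁻¹ • M) (b, y₁) = ∑ b, (m⁻¹ • M) (b, y₂) := by
    simp only [Pi.smul_apply, ← Finset.smul_sum, hM, implies_true]
  have hN_sums := setting_sums_eq_of_identities (fun β hβ => (hNK_id β hβ).1) hM_sums
  have hK_sums := setting_sums_eq_of_identities (fun β hβ => (hNK_id β hβ).2) hM_sums
  refine ⟨m • N, m • K, fun p => (hN p).smul hm_nonneg,
    fun y => (sum_card_smul_eq_sum hN_sums y).trans hN_sum, fun p => (hK p).smul hm_nonneg,
    fun y => (sum_card_smul_eq_sum hK_sums y).trans hK_sum, fun p => ?_, fun β hβ => ?_,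
    hK_cl.card_smul hK_sums⟩
  · calc M p = m • (m⁻¹ • M) p := (smul_inv_smul₀ hm (M p)).symm
      _ = ω • (m • N) p + (1 - ω) • (m • K) p := by
        rw [hM_eq p, smul_add, smul_comm m ω, smul_comm m (1 - ω)]
        rfl
  · exact (hNK_id β ((sum_smul_smul_eq_zero_iff β M (inv_ne_zero hm)).mpr hβ)).imp
      (sum_smul_smul_eq_zero_iff β N hm).mpr (sum_smul_smul_eq_zero_iff β K hm).mpr

end FlagConvexification

theorem nonclassical_fraction_invariant_under_flag_convexification_general
    {d : ℕ} {B Y : Type*} [Fintype B] [Fintype Y] [Nonempty Y]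
    (M : B × Y → Matrix (Fin d) (Fin d) ℂ)
    (hnorm : ∀ y : Y, ∑ b : B, M (b, y) = 1) :
    (∀ ω ∈ Set.Icc (0 : ℝ) 1,
        (MultiDecomp M ω ↔
          SingleDecomp (fun p : B × Y => ((Fintype.card Y : ℝ)⁻¹) • M p) ω)) ∧
      sInf {ω ∈ Set.Icc (0 : ℝ) 1 | MultiDecomp M ω} =
        sInf {ω ∈ Set.Icc (0 : ℝ) 1 |
          SingleDecomp (fun p : B × Y => ((Fintype.card Y : ℝ)⁻¹) • M p) ω} := by
  have key : ∀ ω, MultiDecomp M ω ↔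
      SingleDecomp (fun p : B × Y => ((Fintype.card Y : ℝ)⁻¹) • M p) ω :=
    fun ω => ⟨MultiDecomp.singleDecomp_inv_card_smul,
      MultiDecomp.of_singleDecomp_inv_card_smul hnorm⟩
  exact ⟨fun ω _ => key ω, by simp only [key]⟩

theorem nonclassical_fraction_invariant_under_flag_convexification
    {d : ℕ} (hd : 1 ≤ d) {B Y : Type*} [Fintype B] [Fintype Y] [Nonempty Y]
    (M : B × Y → Matrix (Fin d) (Fin d) ℂ)
    (hpsd : ∀ p, (M p).PosSemidef)
    (hnorm : ∀ y : Y, ∑ b : B, M (b, y) = 1) :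
    (∀ ω ∈ Set.Icc (0 : ℝ) 1,
        (MultiDecomp M ω ↔
          SingleDecomp (fun p : B × Y => ((Fintype.card Y : ℝ)⁻¹) • M p) ω)) ∧
      sInf {ω ∈ Set.Icc (0 : ℝ) 1 | MultiDecomp M ω} =
        sInf {ω ∈ Set.Icc (0 : ℝ) 1 |
          SingleDecomp (fun p : B × Y => ((Fintype.card Y : ℝ)⁻¹) • M p) ω} :=
  nonclassical_fraction_invariant_under_flag_convexification_general M hnorm
end
end

section
/- Let d ≥ 1 and n ≥ 1 be natural numbers, and for each y ∈ Fin n let (M_{b|y})_{b ∈ Fin d} be Hermitian d×d complex matrices satisfying Tr(M_{b|y} M_{b'|y}) = 1 if b = b' and 0 if b ≠ b' (orthonormality within each basis), and Tr(M_{b|y} M_{b'|y'}) = 1/d whenever y ≠ y' (mutual unbiasedness). Let k : Fin n → ℕ with k(y) < d for every y. Then the family of matrices {M_{b|y} : y ∈ Fin n, b ∈ Fin d with b < k(y)} is linearly independent over ℝ. -/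
open Matrix BigOperators
open scoped ComplexOrder

noncomputable section

theorem mub_effects_linearly_independent
    {d n : ℕ} (hd : 1 ≤ d) (hn : 1 ≤ n)
    (M : Fin n → Fin d → Matrix (Fin d) (Fin d) ℂ)
    (hherm : ∀ y b, (M y b).IsHermitian)
    (horth : ∀ y : Fin n, ∀ b b' : Fin d,
      (M y b * M y b').trace = if b = b' then 1 else 0)
    (hmub : ∀ y y' : Fin n, y ≠ y' → ∀ b b' : Fin d,
      (M y b * M y' b').trace = 1 / (d : ℂ))
    (k : Fin n → ℕ) (hk : ∀ y, k y < d)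
    (α : Fin d × Fin n → ℝ)
    (hsupp : ∀ (b : Fin d) (y : Fin n), k y ≤ (b : ℕ) → α (b, y) = 0)
    (hzero : ∑ p : Fin d × Fin n, α p • M p.2 p.1 = 0) :
    ∀ p : Fin d × Fin n, α p = 0 := by
  have hd0 : (d : ℂ) ≠ 0 := by
    exact_mod_cast Nat.cast_ne_zero.mpr (by omega)
  set S : Fin n → ℂ := fun y => ∑ b' : Fin d, (α (b', y) : ℂ) with hS
  have key : ∀ (y : Fin n) (b : Fin d),
      (α (b, y) : ℂ) + (∑ y' ∈ Finset.univ.erase y, S y') / d = 0 := by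
    intro y b
    have h0 := congrArg (fun X : Matrix (Fin d) (Fin d) ℂ => (X * M y b).trace) hzero
    simp only [Finset.sum_mul, Matrix.zero_mul, Matrix.trace_zero, Matrix.trace_sum] at h0
    have h1 : ∀ p : Fin d × Fin n, ((α p • M p.2 p.1) * M y b).trace
        = (α p : ℂ) * (M p.2 p.1 * M y b).trace := by
      intro p
      rw [Matrix.smul_mul, Matrix.trace_smul]
      simp [Complex.real_smul]
    rw [Finset.sum_congr rfl (fun p _ => h1 p)] at h0
    rw [Fintype.sum_prod_type, Finset.sum_comm] at h0
    rw [← Finset.add_sum_erase _ _ (Finset.mem_univ y)] at h0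
    have hy : ∑ b' : Fin d, (α (b', y) : ℂ) * (M y b' * M y b).trace = (α (b, y) : ℂ) := by
      have : ∀ b' : Fin d, (α (b', y) : ℂ) * (M y b' * M y b).trace
          = if b' = b then (α (b', y) : ℂ) else 0 := by
        intro b'
        rw [horth]
        split <;> simp
      rw [Finset.sum_congr rfl (fun b' _ => this b'), Finset.sum_ite_eq' Finset.univ b]
      simp
    have hy' : ∀ y' ∈ Finset.univ.erase y,
        ∑ b' : Fin d, (α (b', y') : ℂ) * (M y' b' * M y b).trace = S y' / d := by
      intro y' hy'
      have hne : y' ≠ y := Finset.ne_of_mem_erase hy'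
      have : ∀ b' : Fin d, (α (b', y') : ℂ) * (M y' b' * M y b).trace
          = (α (b', y') : ℂ) / d := by
        intro b'
        rw [hmub y' y hne]
        ring
      rw [Finset.sum_congr rfl (fun b' _ => this b')]
      rw [hS]
      rw [Finset.sum_div]
    rw [hy, Finset.sum_congr rfl hy'] at h0
    rw [Finset.sum_div]
    exact h0
  rintro ⟨b, y⟩
  set b0 : Fin d := ⟨k y, hk y⟩ with hb0
  have h1 := key y b0
  rw [hsupp b0 y (le_refl _)] at h1
  simp only [Complex.ofReal_zero, zero_add] at h1
  have h2 := key y b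
  rw [h1, add_zero] at h2
  exact_mod_cast h2
end
end

section
/- Let d ≥ 1 and n ≥ 1 be natural numbers, and for each y ∈ Fin n let (M_{b|y})_{b ∈ Fin d} be Hermitian d×d complex matrices satisfying Tr(M_{b|y} M_{b'|y}) = 1 if b = b' and 0 if b ≠ b', Tr(M_{b|y} M_{b'|y'}) = 1/d whenever y ≠ y', and ∑_{b ∈ Fin d} M_{b|y} = 1 for every y. Then for every α : Fin d × Fin n → ℝ, one has ∑_{b,y} α(b,y) • M_{b|y} = 0 if and only if there exists c : Fin n → ℝ with ∑_y c(y) = 0 and α(b,y) = c(y) for all b and y. (In words: the only real linear dependences among the effects of a collection of mutually unbiased bases are those generated by the normalization relations ∑_b M_{b|y} = ∑_b M_{b|y'}.) -/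
open Matrix BigOperators
open scoped ComplexOrder

noncomputable section

theorem mub_linear_dependences_are_normalization
    {d n : ℕ} (hd : 1 ≤ d) (hn : 1 ≤ n)
    (M : Fin n → Fin d → Matrix (Fin d) (Fin d) ℂ)
    (hherm : ∀ y b, (M y b).IsHermitian)
    (horth : ∀ y : Fin n, ∀ b b' : Fin d,
      (M y b * M y b').trace = if b = b' then 1 else 0)
    (hmub : ∀ y y' : Fin n, y ≠ y' → ∀ b b' : Fin d,
      (M y b * M y' b').trace = 1 / (d : ℂ))
    (hcomplete : ∀ y : Fin n, ∑ b : Fin d, M y b = 1) :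
    ∀ α : Fin d × Fin n → ℝ,
      (∑ p : Fin d × Fin n, α p • M p.2 p.1 = 0) ↔
        ∃ c : Fin n → ℝ, (∑ y : Fin n, c y = 0) ∧
          ∀ (b : Fin d) (y : Fin n), α (b, y) = c y := by
  intro α
  have hd0 : (d : ℂ) ≠ 0 := by
    exact_mod_cast Nat.cast_ne_zero.mpr (by omega)
  have hn0 : (n : ℝ) ≠ 0 := by exact_mod_cast Nat.cast_ne_zero.mpr (by omega)
  set S : ℂ := ∑ p : Fin d × Fin n, (α p : ℂ) with hS
  set Sy : Fin n → ℂ := fun y => ∑ b : Fin d, (α (b, y) : ℂ) with hSy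
  constructor
  · intro h
    -- key identity
    have key : ∀ (y0 : Fin n) (b0 : Fin d),
        (α (b0, y0) : ℂ) = (Sy y0 - S) / d := by
      intro y0 b0
      have htr : ((∑ p : Fin d × Fin n, α p • M p.2 p.1) * M y0 b0).trace = 0 := by
        rw [h, zero_mul, trace_zero]
      rw [Finset.sum_mul] at htr
      simp only [smul_mul_assoc] at htr
      rw [trace_sum] at htr
      simp only [trace_smul] at htr
      have e1 : ∀ p : Fin d × Fin n, (α p : ℝ) • (M p.2 p.1 * M y0 b0).trace
          = (α p : ℂ) * (if p.2 = y0 then (if p.1 = b0 then (1:ℂ) else 0) else 1/d) := by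
        intro p
        by_cases hy : p.2 = y0
        · rw [hy, horth, if_pos rfl, Complex.real_smul]
        · rw [hmub p.2 y0 hy, if_neg hy, Complex.real_smul]
      rw [Finset.sum_congr rfl (fun p _ => e1 p)] at htr
      rw [Fintype.sum_prod_type_right] at htr
      have e2 : ∀ y : Fin n,
          (∑ b : Fin d, (α (b, y) : ℂ) *
            (if y = y0 then (if b = b0 then (1:ℂ) else 0) else 1/d))
          = if y = y0 then (α (b0, y0) : ℂ) else Sy y * (1/d) := by
        intro y
        by_cases hy : y = y0
        · subst hy
          simp [mul_ite, Finset.sum_ite_eq']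
        · simp only [if_neg hy, Finset.sum_mul, hSy]
      rw [Finset.sum_congr rfl (fun y _ => e2 y)] at htr
      rw [← Finset.add_sum_erase _ _ (Finset.mem_univ y0), if_pos rfl] at htr
      have e3 : (∑ y ∈ Finset.univ.erase y0,
          if y = y0 then (α (b0, y0) : ℂ) else Sy y * (1/d))
          = (S - Sy y0) * (1/d) := by
        rw [Finset.sum_congr rfl (fun y hy => if_neg (Finset.ne_of_mem_erase hy))]
        rw [← Finset.sum_mul, Finset.sum_erase_eq_sub (Finset.mem_univ y0)]
        congr 1
        rw [hS, Fintype.sum_prod_type_right]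
      rw [e3] at htr
      field_simp at htr ⊢
      linear_combination htr
    -- S = 0
    have hS0 : S = 0 := by
      have y0 : Fin n := ⟨0, by omega⟩
      have h1 : Sy y0 = ∑ _b : Fin d, (Sy y0 - S) / d :=
        Finset.sum_congr rfl (fun b _ => key y0 b)
      rw [Finset.sum_const, Finset.card_univ, Fintype.card_fin, nsmul_eq_mul,
        mul_div_cancel₀ _ hd0] at h1
      linear_combination h1
    refine ⟨fun y => α (⟨0, by omega⟩, y), ?_, ?_⟩
    · have : (∑ y : Fin n, (α (⟨0, by omega⟩, y) : ℂ)) = 0 := by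
        calc (∑ y : Fin n, (α ((⟨0, by omega⟩ : Fin d), y) : ℂ))
            = ∑ y : Fin n, (Sy y - S) / d := by
              exact Finset.sum_congr rfl (fun y _ => key y _)
          _ = 0 := by
              rw [hS0]
              simp only [sub_zero]
              rw [← Finset.sum_div]
              have : (∑ y : Fin n, Sy y) = S := by
                rw [hS, Fintype.sum_prod_type_right]
              rw [this, hS0, zero_div]
      exact_mod_cast (by push_cast at this ⊢; exact_mod_cast this : ((∑ y : Fin n, α (⟨0, by omega⟩, y) : ℝ) : ℂ) = 0)
    · intro b y
      have h1 := key y b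
      have h2 := key y ⟨0, by omega⟩
      have : ((α (b, y) : ℝ) : ℂ) = ((α (⟨0, by omega⟩, y) : ℝ) : ℂ) := by
        rw [h1, h2]
      exact_mod_cast this
  · rintro ⟨c, hc, hα⟩
    have : ∀ p : Fin d × Fin n, α p • M p.2 p.1 = c p.2 • M p.2 p.1 := by
      intro p
      rw [show α p = c p.2 from by rw [← hα p.1 p.2]]
    rw [Finset.sum_congr rfl (fun p _ => this p), Fintype.sum_prod_type_right]
    have : ∀ y : Fin n, (∑ b : Fin d, c y • M y b) = c y • (1 : Matrix (Fin d) (Fin d) ℂ) := by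
      intro y
      rw [← Finset.smul_sum, hcomplete]
    rw [Finset.sum_congr rfl (fun y _ => this y), ← Finset.sum_smul, hc, zero_smul]
end
end

section
/- Let d ≥ 1, let B and Λ be finite sets, let M : B → Matrix (Fin d) (Fin d) ℂ be a POVM (each M_b positive semidefinite, ∑_b M_b = 1), let D : Λ → B → ℝ, let G : Λ → Matrix (Fin d) (Fin d) ℂ, let X : B → Matrix (Fin d) (Fin d) ℂ with each X_b Hermitian, and let η ∈ ℝ with η ≤ 1. Assume: (a) each G_λ is positive semidefinite and ∑_λ D_λ(b) • G_λ = η • M_b + (1−η) • (Tr(M_b)/d) • 1 for every b ∈ B; (b) for every λ, the matrix ∑_b D_λ(b) • X_b is positive semidefinite; (c) (1/d) ∑_b Tr(X_b) Tr(M_b) ≤ 1 + ∑_b Tr(X_b M_b), where all the traces appearing are real numbers since M_b, G_λ are positive semidefinite and X_b is Hermitian. Then η ≤ 1 + ∑_b Tr(X_b M_b). (This is the weak semidefinite-programming duality bound on the white-noise robustness of a measurement: every feasible solution of the dual program upper-bounds the noise parameter of any classically simulable noisy version of M.) -/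
/-!
Pair the dual variables with the simulation: `S = ∑_λ Tr((∑_b D_λ(b) X_b) G_λ)` is nonnegative,
being a sum of traces of products of positive semidefinite matrices. Exchanging the sums and
inserting the decomposition of the noisy measurement gives
`S = η ∑_b Tr(X_b M_b) + (1 - η) d⁻¹ ∑_b Tr(X_b) Tr(M_b)`, and the dual constraint bounds the
second sum by `1 + ∑_b Tr(X_b M_b)`; since `1 - η ≥ 0` this yields `0 ≤ 1 + ∑_b Tr(X_b M_b) - η`.
-/

open Matrix BigOperators
open scoped ComplexOrder

open scoped MatrixOrder in
theorem Matrix.PosSemidef.trace_mul_nonneg {𝕜 n : Type*} [RCLike 𝕜] [Fintype n] [DecidableEq n]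
    {A B : Matrix n n 𝕜} (hA : A.PosSemidef) (hB : B.PosSemidef) : 0 ≤ (A * B).trace := by
  obtain ⟨E, rfl⟩ := CStarAlgebra.nonneg_iff_eq_star_mul_self.mp hB.nonneg
  rw [← Matrix.mul_assoc, trace_mul_cycle]
  exact (hA.mul_mul_conjTranspose_same E).trace_nonneg

theorem Matrix.IsHermitian.im_trace_eq_zero {𝕜 n : Type*} [RCLike 𝕜] [Fintype n]
    {A : Matrix n n 𝕜} (hA : A.IsHermitian) : RCLike.im A.trace = 0 :=
  RCLike.conj_eq_iff_im.mp (by rw [starRingEnd_apply, ← trace_conjTranspose, hA.eq])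

theorem Matrix.sum_trace_sum_smul_mul_eq {n B Λ R α : Type*} [Fintype n] [Fintype B] [Fintype Λ]
    [CommSemiring α] [Monoid R] [DistribMulAction R α] [IsScalarTower R α α]
    [SMulCommClass R α α] (D : Λ → B → R) (X : B → Matrix n n α) (G : Λ → Matrix n n α) :
    ∑ l, ((∑ b, D l b • X b) * G l).trace = ∑ b, (X b * ∑ l, D l b • G l).trace := by
  simp only [Finset.sum_mul, Matrix.mul_sum, Matrix.smul_mul, Matrix.mul_smul, trace_sum,
    trace_smul]
  exact Finset.sum_comm

theorem Matrix.IsHermitian.re_trace_mul_whiteNoise {n : ℕ} {X : Matrix (Fin n) (Fin n) ℂ}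
    (hX : X.IsHermitian) (M : Matrix (Fin n) (Fin n) ℂ) (η : ℝ) :
    (X * (η • M + (1 - η) • ((M.trace / (n : ℂ)) • (1 : Matrix (Fin n) (Fin n) ℂ)))).trace.re =
      η * (X * M).trace.re + (1 - η) * ((n : ℝ)⁻¹ * (X.trace.re * M.trace.re)) := by
  have him : X.trace.im = 0 := hX.im_trace_eq_zero
  simp only [Matrix.mul_add, Matrix.mul_smul, Matrix.mul_one, trace_add, trace_smul,
    Complex.add_re, Complex.real_smul, Complex.mul_re, Complex.ofReal_re, Complex.ofReal_im, him,
    Complex.div_natCast_re, smul_eq_mul]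
  ring

theorem weak_duality_white_noise_robustness_general
    {d : ℕ} {B Λ : Type*} [Fintype B] [Fintype Λ]
    (M : B → Matrix (Fin d) (Fin d) ℂ)
    (D : Λ → B → ℝ)
    (G : Λ → Matrix (Fin d) (Fin d) ℂ)
    (X : B → Matrix (Fin d) (Fin d) ℂ)
    (hXherm : ∀ b, (X b).IsHermitian)
    (η : ℝ) (hη : η ≤ 1)
    (hGpsd : ∀ l, (G l).PosSemidef)
    (hdecomp : ∀ b : B, ∑ l : Λ, D l b • G l =
      η • M b + (1 - η) • (((M b).trace / (d : ℂ)) • (1 : Matrix (Fin d) (Fin d) ℂ)))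
    (hdualfeas : ∀ l : Λ, (∑ b : B, D l b • X b).PosSemidef)
    (hdualcon : (d : ℝ)⁻¹ * ∑ b : B, ((X b).trace.re * (M b).trace.re) ≤
      1 + ∑ b : B, ((X b * M b).trace.re)) :
    η ≤ 1 + ∑ b : B, ((X b * M b).trace.re) := by
  have hpairing : 0 ≤ ∑ l, ((∑ b, D l b • X b) * G l).trace :=
    Finset.sum_nonneg fun l _ => (hdualfeas l).trace_mul_nonneg (hGpsd l)
  have hexpand : 0 ≤ η * ∑ b, (X b * M b).trace.re +
      (1 - η) * ((d : ℝ)⁻¹ * ∑ b, (X b).trace.re * (M b).trace.re) := by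
    have := (Complex.nonneg_iff.mp hpairing).1
    simpa only [sum_trace_sum_smul_mul_eq, Complex.re_sum, hdecomp,
      (hXherm _).re_trace_mul_whiteNoise, Finset.sum_add_distrib, ← Finset.mul_sum] using this
  linarith [mul_le_mul_of_nonneg_left hdualcon (sub_nonneg.mpr hη)]

theorem weak_duality_white_noise_robustness
    {d : ℕ} (hd : 1 ≤ d) {B Λ : Type*} [Fintype B] [Fintype Λ]
    (M : B → Matrix (Fin d) (Fin d) ℂ)
    (hMpsd : ∀ b, (M b).PosSemidef)
    (hMnorm : ∑ b : B, M b = 1)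
    (D : Λ → B → ℝ)
    (G : Λ → Matrix (Fin d) (Fin d) ℂ)
    (X : B → Matrix (Fin d) (Fin d) ℂ)
    (hXherm : ∀ b, (X b).IsHermitian)
    (η : ℝ) (hη : η ≤ 1)
    (hGpsd : ∀ l, (G l).PosSemidef)
    (hdecomp : ∀ b : B, ∑ l : Λ, D l b • G l =
      η • M b + (1 - η) • (((M b).trace / (d : ℂ)) • (1 : Matrix (Fin d) (Fin d) ℂ)))
    (hdualfeas : ∀ l : Λ, (∑ b : B, D l b • X b).PosSemidef)
    (hdualcon : (d : ℝ)⁻¹ * ∑ b : B, ((X b).trace.re * (M b).trace.re) ≤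
      1 + ∑ b : B, ((X b * M b).trace.re)) :
    η ≤ 1 + ∑ b : B, ((X b * M b).trace.re) :=
  weak_duality_white_noise_robustness_general M D G X hXherm η hη hGpsd hdecomp hdualfeas hdualcon
end

section
/- Let d ≥ 1, let B and Λ be finite sets, let M : B → Matrix (Fin d) (Fin d) ℂ be a POVM (each M_b positive semidefinite, ∑_b M_b = 1), let D : Λ → B → ℝ with ∑_{b∈B} D_λ(b) = 1 for every λ, and let Λ₀ ∈ ℝ be such that Λ₀ • 1 − ∑_b D_λ(b) • M_b is positive semidefinite for every λ. Assume S := ∑_b ( Tr(M_b²) − (Tr M_b)²/d ) > 0. If η ∈ ℝ with η ≤ 1 and there exist positive semidefinite matrices G_λ with ∑_λ D_λ(b) • G_λ = η • M_b + (1−η) • (Tr(M_b)/d) • 1 for every b, then η ≤ ( d²·Λ₀ − ∑_b (Tr M_b)² ) / ( d·∑_b Tr(M_b²) − ∑_b (Tr M_b)² ). (Here all traces are real since the matrices are positive semidefinite, and the denominator equals d·S > 0.) -/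
open Matrix BigOperators
open scoped ComplexOrder

noncomputable section

/-!
Weak duality for the robustness SDP. Pairing the decomposition with the POVM and exchanging the
sums, `∑_b Tr(M_b ∑_λ D_λ(b) G_λ) = ∑_λ Tr((∑_b D_λ(b) M_b) G_λ) ≤ Λ₀ ∑_λ Tr G_λ = Λ₀ d`, since
`Λ₀ • 1 - ∑_b D_λ(b) M_b` and `G_λ` are positive semidefinite and the `G_λ` sum to the identity
(the response functions are normalised and the noisy POVM still sums to `1`). Evaluated on the
noisy POVM, the left side is `η ∑_b Tr(M_b²) + (1 - η) ∑_b (Tr M_b)² / d`, and solving for `η`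
(its coefficient is `d S > 0` after clearing `d`) gives the bound.
-/

theorem Finset.sum_sum_smul_of_sum_eq_one {B Λ S X : Type*} [Fintype B] [Fintype Λ] [Semiring S]
    [AddCommMonoid X] [Module S X] {D : Λ → B → S} (hD : ∀ l, ∑ b, D l b = 1) (G : Λ → X) :
    ∑ b, ∑ l, D l b • G l = ∑ l, G l := by
  rw [Finset.sum_comm]
  simp only [← Finset.sum_smul, hD, one_smul]

namespace Matrix

variable {n : Type*} [Fintype n]

theorem sum_trace_mul_sum_smul {B Λ R S : Type*} [Fintype B] [Fintype Λ] [CommSemiring R]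
    [Monoid S] [DistribMulAction S R] [SMulCommClass S R R] [IsScalarTower S R R]
    (D : Λ → B → S) (M : B → Matrix n n R) (G : Λ → Matrix n n R) :
    ∑ b, (M b * ∑ l, D l b • G l).trace = ∑ l, ((∑ b, D l b • M b) * G l).trace := by
  simp only [Finset.mul_sum, Finset.sum_mul, trace_sum, Matrix.mul_smul, Matrix.smul_mul,
    trace_smul]
  exact Finset.sum_comm

variable [DecidableEq n]

open scoped MatrixOrder Matrix.Norms.L2Operator in
theorem PosSemidef.trace_mul_nonneg_s11 {𝕜 : Type*} [RCLike 𝕜] {A B : Matrix n n 𝕜}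
    (hA : A.PosSemidef) (hB : B.PosSemidef) : 0 ≤ (A * B).trace := by
  obtain ⟨C, rfl⟩ := CStarAlgebra.nonneg_iff_eq_star_mul_self.mp hA.nonneg
  rw [Matrix.mul_assoc, trace_mul_comm]
  exact (hB.mul_mul_conjTranspose_same C).trace_nonneg

theorem PosSemidef.re_trace_mul_le {A G : Matrix n n ℂ} {c : ℝ}
    (hA : (c • 1 - A).PosSemidef) (hG : G.PosSemidef) :
    (A * G).trace.re ≤ c * G.trace.re := by
  have h := (Complex.nonneg_iff.mp (hA.trace_mul_nonneg_s11 hG)).1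
  simp only [sub_mul, smul_mul, one_mul, trace_sub, trace_smul, Complex.sub_re,
    Complex.real_smul, Complex.re_ofReal_mul] at h
  linarith

def whiteNoiseMix (η : ℝ) (M : Matrix n n ℂ) : Matrix n n ℂ :=
  η • M + (1 - η) • ((M.trace / Fintype.card n) • 1)

theorem sum_whiteNoiseMix [Nonempty n] {B : Type*} [Fintype B] {M : B → Matrix n n ℂ}
    (hM : ∑ b, M b = 1) (η : ℝ) : ∑ b, whiteNoiseMix η (M b) = 1 := by
  have hcard : (Fintype.card n : ℂ) ≠ 0 := by exact_mod_cast Fintype.card_ne_zero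
  simp only [whiteNoiseMix, Finset.sum_add_distrib, ← Finset.smul_sum, ← Finset.sum_smul,
    ← Finset.sum_div, ← trace_sum, hM, trace_one, div_self hcard, one_smul, ← add_smul]
  norm_num

theorem PosSemidef.re_trace_mul_whiteNoiseMix {M : Matrix n n ℂ} (hM : M.PosSemidef) (η : ℝ) :
    (M * whiteNoiseMix η M).trace.re =
      η * (M * M).trace.re + (1 - η) * (M.trace.re ^ 2 / Fintype.card n) := by
  have hreal : M.trace = (M.trace.re : ℂ) :=
    Complex.eq_re_of_ofReal_le (r := 0) (by simpa using hM.trace_nonneg)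
  simp only [whiteNoiseMix, Matrix.mul_add, Matrix.mul_smul, Matrix.mul_one, trace_add,
    trace_smul, Complex.add_re, Complex.real_smul, Complex.re_ofReal_mul, smul_eq_mul]
  rw [hreal]
  norm_cast
  ring

theorem sum_re_trace_mul_le_of_decomposition {B Λ : Type*} [Fintype B] [Fintype Λ]
    {M : B → Matrix n n ℂ} {D : Λ → B → ℝ} (hD : ∀ l, ∑ b, D l b = 1) {Λ₀ : ℝ}
    (hΛ₀ : ∀ l, (Λ₀ • 1 - ∑ b, D l b • M b).PosSemidef) {G : Λ → Matrix n n ℂ}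
    (hG : ∀ l, (G l).PosSemidef) {N : B → Matrix n n ℂ} (hGN : ∀ b, ∑ l, D l b • G l = N b)
    (hN : ∑ b, N b = 1) :
    ∑ b, (M b * N b).trace.re ≤ Λ₀ * Fintype.card n := by
  have hGsum : ∑ l, G l = 1 := by
    rw [← Finset.sum_sum_smul_of_sum_eq_one hD, ← hN]
    simp only [hGN]
  calc ∑ b, (M b * N b).trace.re
      = ∑ l, ((∑ b, D l b • M b) * G l).trace.re := by
        simp only [← hGN, ← Complex.re_sum, sum_trace_mul_sum_smul]
    _ ≤ ∑ l, Λ₀ * (G l).trace.re := Finset.sum_le_sum fun l _ => (hΛ₀ l).re_trace_mul_le (hG l)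
    _ = Λ₀ * Fintype.card n := by
        rw [← Finset.mul_sum, ← Complex.re_sum, ← trace_sum, hGsum, trace_one]
        simp

end Matrix

theorem analytic_upper_bound_white_noise_robustness_general
    {d : ℕ} (hd : 1 ≤ d) {B Λ : Type*} [Fintype B] [Fintype Λ]
    (M : B → Matrix (Fin d) (Fin d) ℂ)
    (hMpsd : ∀ b, (M b).PosSemidef)
    (hMnorm : ∑ b : B, M b = 1)
    (D : Λ → B → ℝ)
    (hDnorm : ∀ l, ∑ b : B, D l b = 1)
    (Λ₀ : ℝ)
    (hΛ₀ : ∀ l : Λ,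
      (Λ₀ • (1 : Matrix (Fin d) (Fin d) ℂ) - ∑ b : B, D l b • M b).PosSemidef)
    (hS : 0 < ∑ b : B, ((M b * M b).trace.re - ((M b).trace.re) ^ 2 / (d : ℝ)))
    (η : ℝ)
    (G : Λ → Matrix (Fin d) (Fin d) ℂ)
    (hGpsd : ∀ l, (G l).PosSemidef)
    (hdecomp : ∀ b : B, ∑ l : Λ, D l b • G l =
      η • M b + (1 - η) • (((M b).trace / (d : ℂ)) • (1 : Matrix (Fin d) (Fin d) ℂ))) :
    η ≤ ((d : ℝ) ^ 2 * Λ₀ - ∑ b : B, ((M b).trace.re) ^ 2) /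
      ((d : ℝ) * ∑ b : B, (M b * M b).trace.re - ∑ b : B, ((M b).trace.re) ^ 2) := by
  have : NeZero d := ⟨by omega⟩
  have hd₀ : (0 : ℝ) < d := by exact_mod_cast hd
  have hdual := sum_re_trace_mul_le_of_decomposition hDnorm hΛ₀ hGpsd
    (N := fun b => whiteNoiseMix η (M b)) (by simpa [whiteNoiseMix] using hdecomp)
    (sum_whiteNoiseMix hMnorm η)
  simp only [(hMpsd _).re_trace_mul_whiteNoiseMix, Finset.sum_add_distrib, ← Finset.mul_sum,
    ← Finset.sum_div, Fintype.card_fin] at hdual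
  rw [Finset.sum_sub_distrib, ← Finset.sum_div, sub_pos, div_lt_iff₀ hd₀] at hS
  rw [le_div_iff₀ (by linarith)]
  field_simp at hdual
  linear_combination hdual

theorem analytic_upper_bound_white_noise_robustness
    {d : ℕ} (hd : 1 ≤ d) {B Λ : Type*} [Fintype B] [Fintype Λ]
    (M : B → Matrix (Fin d) (Fin d) ℂ)
    (hMpsd : ∀ b, (M b).PosSemidef)
    (hMnorm : ∑ b : B, M b = 1)
    (D : Λ → B → ℝ)
    (hDnorm : ∀ l, ∑ b : B, D l b = 1)
    (Λ₀ : ℝ)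
    (hΛ₀ : ∀ l : Λ,
      (Λ₀ • (1 : Matrix (Fin d) (Fin d) ℂ) - ∑ b : B, D l b • M b).PosSemidef)
    (hS : 0 < ∑ b : B, ((M b * M b).trace.re - ((M b).trace.re) ^ 2 / (d : ℝ)))
    (η : ℝ) (hη : η ≤ 1)
    (G : Λ → Matrix (Fin d) (Fin d) ℂ)
    (hGpsd : ∀ l, (G l).PosSemidef)
    (hdecomp : ∀ b : B, ∑ l : Λ, D l b • G l =
      η • M b + (1 - η) • (((M b).trace / (d : ℂ)) • (1 : Matrix (Fin d) (Fin d) ℂ))) :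
    η ≤ ((d : ℝ) ^ 2 * Λ₀ - ∑ b : B, ((M b).trace.re) ^ 2) /
      ((d : ℝ) * ∑ b : B, (M b * M b).trace.re - ∑ b : B, ((M b).trace.re) ^ 2) :=
  analytic_upper_bound_white_noise_robustness_general hd M hMpsd hMnorm D hDnorm Λ₀ hΛ₀ hS η G hGpsd
    hdecomp
end
end

section
/- Let k ≥ 4 be a natural number and define the k-outcome symmetric planar qubit measurement M : Fin k → Matrix (Fin 2) (Fin 2) ℂ by M_b := (1/k) • ( 1 + cos(2πb/k) • σx + sin(2πb/k) • σz ). For η ∈ [0,1] define M^η_b := η • M_b + (1−η) • (1/k) • 1 (note Tr(M_b) = 2/k and d = 2, so (1−η)(Tr M_b/d)•1 = (1−η)(1/k)•1). Then the measurement (M^η_b)_{b ∈ Fin k} on ℂ² is classical if and only if η ≤ 1/(2 cos(π/k)); i.e. the white-noise robustness of the k-outcome symmetric planar measurement equals 1/(2 cos(π/k)). -/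
/-!
Identify the x–z Bloch plane with `ℂ`, so that `M^η_b = (1 + η (ω_b · σ)) / k` where
`ω_b = e^{2πib/k}` are the vertices of a regular `k`-gon.

A point `q` of the polytope of `M^η` is affine in the vertex: `q_b = (1 + 2⟪Q, ω_b⟫) / k` with
`Q = ∑ q_b ω_b`, because `q` minus this affine function is a linear relation among the `M^η_b`
orthogonal to it. Evaluating at the vertex closest to `-Q` gives `2 ‖Q‖ cos(π/k) ≤ 1`.
Pairing the Bloch vectors in `M^η_b = ∑_l q_l(b) G_l` with `ω_b` and summing over `b` gives
`η = ∑_l ⟪Q_l, g_l⟫ ≤ ∑_l ‖Q_l‖ t_l` (`g_l`, `t_l` the Bloch vector and half-trace of `G_l`), so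
`2 η cos(π/k) ≤ ∑_l t_l = 1`.

Conversely, let `u_l` be the unit vectors opposite to the edge midpoints of the `k`-gon, so that
`⟪u_l, ω_b⟫ ≥ -cos(π/k)`. Then `G_l = (1 + u_l · σ) / k` and `q_l(b) = (1 + 2η⟪u_l, ω_b⟫) / k`
form a classical model as soon as `2 η cos(π/k) ≤ 1`; the decomposition holds because the
vertices of a regular polygon form a tight frame, `∑_b 2⟪u_b, w⟫ u_b = k w`.
-/

open Matrix BigOperators Real
open scoped ComplexOrder

noncomputable section

def σx : Matrix (Fin 2) (Fin 2) ℂ := !![0, 1; 1, 0]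
def σz : Matrix (Fin 2) (Fin 2) ℂ := !![1, 0; 0, -1]

/-- The `k`-outcome symmetric planar qubit measurement. -/
def planarMeas (k : ℕ) : Fin k → Matrix (Fin 2) (Fin 2) ℂ :=
  fun b => ((k : ℝ)⁻¹) •
    ((1 : Matrix (Fin 2) (Fin 2) ℂ) +
      Real.cos (2 * π * (b : ℕ) / k) • σx + Real.sin (2 * π * (b : ℕ) / k) • σz)

open scoped InnerProductSpace ComplexConjugate

theorem inner_exp_ofReal_mul_I (x y : ℝ) :
    ⟪Complex.exp (x * Complex.I), Complex.exp (y * Complex.I)⟫_ℝ = Real.cos (y - x) := by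
  rw [Complex.inner, ← Complex.exp_conj, map_mul, Complex.conj_ofReal, Complex.conj_I,
    ← Complex.exp_add, ← Complex.exp_ofReal_mul_I_re (y - x)]
  congr 2
  push_cast
  ring

theorem cos_le_cos_of_abs_le {x a : ℝ} (h : |x| ≤ a) (ha : a ≤ π) : Real.cos a ≤ Real.cos x := by
  rw [← Real.cos_abs x]
  exact Real.cos_le_cos_of_nonneg_of_le_pi (abs_nonneg x) ha h

theorem cos_pi_div_pos {k : ℕ} (hk : 2 < k) : 0 < Real.cos (π / k) := by
  have hk' : (2 : ℝ) < k := by exact_mod_cast hk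
  have hpos : 0 < π / k := div_pos pi_pos (by linarith)
  refine Real.cos_pos_of_mem_Ioo ⟨by linarith [pi_pos], ?_⟩
  exact div_lt_div_of_pos_left pi_pos two_pos hk'

theorem exists_cos_le_cos_two_pi_mul_div_sub {k : ℕ} (hk : 0 < k) (x : ℝ) :
    ∃ b : Fin k, Real.cos (π / k) ≤ Real.cos (2 * π * (b : ℕ) / k - x) := by
  have hk' : (0 : ℝ) < k := by exact_mod_cast hk
  set n : ℤ := round (x * k / (2 * π))
  have hmod : 0 ≤ n % k := Int.emod_nonneg n (by omega)
  have hlt : n % k < k := Int.emod_lt_of_pos n (by omega)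
  refine ⟨⟨(n % k).toNat, by omega⟩, ?_⟩
  have hb : (((n % k).toNat : ℕ) : ℝ) = n - (n / k : ℤ) * k := by
    rw [show (((n % k).toNat : ℕ) : ℝ) = ((n % k : ℤ) : ℝ) by
      exact_mod_cast Int.toNat_of_nonneg hmod, Int.emod_def]
    push_cast
    ring
  have hround : |x * k / (2 * π) - n| ≤ 1 / 2 := abs_sub_round _
  rw [hb, show 2 * π * ((n : ℝ) - (n / k : ℤ) * k) / k - x
      = (2 * π * n / k - x) - (n / k : ℤ) * (2 * π) by field_simp; ring,
    Real.cos_sub_int_mul_two_pi]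
  refine cos_le_cos_of_abs_le ?_ (div_le_self pi_pos.le (by exact_mod_cast hk))
  calc |2 * π * n / k - x| = 2 * π / k * |x * k / (2 * π) - n| := by
        rw [abs_sub_comm, show x - 2 * π * n / k = 2 * π / k * (x * k / (2 * π) - n) by
          field_simp, abs_mul, abs_of_pos (by positivity : 0 < 2 * π / k)]
    _ ≤ 2 * π / k * (1 / 2) := by gcongr
    _ = π / k := by ring

theorem cos_odd_mul_pi_div_le (k : ℕ) (m : ℤ) :
    Real.cos ((2 * m + 1) * π / k) ≤ Real.cos (π / k) := by
  rcases Nat.eq_zero_or_pos k with rfl | hk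
  · simp
  have hk' : (0 : ℝ) < k := by exact_mod_cast hk
  -- shifting by `n` full turns brings the angle into `[-π, π]`; it stays an odd multiple of `π / k`
  set n : ℤ := round ((2 * (m : ℝ) + 1) / (2 * k))
  have hround : |(2 * (m : ℝ) + 1) / (2 * k) - n| ≤ 1 / 2 := abs_sub_round _
  have hne : 2 * m + 1 - 2 * n * k ≠ 0 := by
    rw [show 2 * m + 1 - 2 * n * k = 2 * (m - n * k) + 1 by ring]
    omega
  have hodd : (1 : ℝ) ≤ |((2 * m + 1 - 2 * n * k : ℤ) : ℝ)| := by
    rw [← Int.cast_abs]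
    exact_mod_cast Int.one_le_abs hne
  have hr : (2 * m + 1) * π / k - n * (2 * π) = ((2 * m + 1 - 2 * n * k : ℤ) : ℝ) * π / k := by
    push_cast
    field_simp
  rw [← Real.cos_sub_int_mul_two_pi _ n, hr, ← Real.cos_abs]
  refine Real.cos_le_cos_of_nonneg_of_le_pi (by positivity) ?_ ?_
  · calc |((2 * m + 1 - 2 * n * k : ℤ) : ℝ) * π / k|
          = 2 * π * |(2 * (m : ℝ) + 1) / (2 * k) - n| := by
            rw [show ((2 * m + 1 - 2 * n * k : ℤ) : ℝ) * π / k
                = 2 * π * ((2 * m + 1) / (2 * k) - n) by push_cast; field_simp,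
              abs_mul, abs_of_pos (by positivity : 0 < 2 * π)]
      _ ≤ 2 * π * (1 / 2) := by gcongr
      _ = π := by ring
  · rw [abs_div, abs_mul, abs_of_pos pi_pos, abs_of_pos hk']
    gcongr
    simpa using mul_le_mul_of_nonneg_right hodd pi_pos.le

def polygonVertex (k b : ℕ) : ℂ := Complex.exp ((2 * π * b / k : ℝ) * Complex.I)

theorem norm_polygonVertex (k b : ℕ) : ‖polygonVertex k b‖ = 1 :=
  Complex.norm_exp_ofReal_mul_I _

theorem polygonVertex_eq_pow (k b : ℕ) :
    polygonVertex k b = Complex.exp (2 * π * Complex.I / k) ^ b := by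
  rw [polygonVertex, ← Complex.exp_nat_mul]
  congr 1
  push_cast
  ring

theorem sum_polygonVertex_pow_eq_zero {k m : ℕ} (hm : ¬ k ∣ m) :
    ∑ b : Fin k, polygonVertex k b ^ m = 0 := by
  rcases Nat.eq_zero_or_pos k with rfl | hk
  · simp
  set ζ := Complex.exp (2 * π * Complex.I / k)
  have hζ : IsPrimitiveRoot ζ k := Complex.isPrimitiveRoot_exp k hk.ne'
  have hne : ζ ^ m ≠ 1 := fun h => hm (hζ.pow_eq_one_iff_dvd m |>.1 h)
  calc ∑ b : Fin k, polygonVertex k b ^ m = ∑ b ∈ Finset.range k, (ζ ^ m) ^ b := by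
        rw [← Fin.sum_univ_eq_sum_range]
        refine Finset.sum_congr rfl fun b _ => ?_
        rw [polygonVertex_eq_pow, ← pow_mul, ← pow_mul, Nat.mul_comm]
    _ = 0 := by
        rw [geom_sum_eq hne, ← pow_mul, mul_comm, pow_mul, hζ.pow_eq_one, one_pow, sub_self,
          zero_div]

theorem sum_polygonVertex_eq_zero {k : ℕ} (hk : 2 ≤ k) : ∑ b : Fin k, polygonVertex k b = 0 := by
  simpa using sum_polygonVertex_pow_eq_zero (k := k) (m := 1) fun h => by
    have := Nat.le_of_dvd one_pos h
    omega

theorem sum_inner_smul_polygonVertex {k : ℕ} (hk : 3 ≤ k) {c : ℂ} (hc : ‖c‖ = 1) (w : ℂ) :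
    ∑ b : Fin k, (2 * ⟪c * polygonVertex k b, w⟫_ℝ) • (c * polygonVertex k b) = (k : ℝ) • w := by
  have hsq : ∑ b : Fin k, (c * polygonVertex k b) ^ 2 = 0 := by
    simp_rw [mul_pow]
    rw [← Finset.mul_sum, sum_polygonVertex_pow_eq_zero fun h => by
      have := Nat.le_of_dvd two_pos h
      omega, mul_zero]
  -- `2⟪u, w⟫ = conj u * w + u * conj w`
  have hterm : ∀ u : ℂ, ‖u‖ = 1 → (2 * ⟪u, w⟫_ℝ) • u = w + conj w * u ^ 2 := by
    intro u hu
    have hu' : conj u * u = 1 := by rw [Complex.conj_mul', hu]; simp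
    rw [Complex.real_smul, Complex.inner, Complex.ofReal_mul, Complex.re_eq_add_conj, map_mul,
      Complex.conj_conj]
    push_cast
    linear_combination w * hu'
  have hunit : ∀ b : Fin k, ‖c * polygonVertex k b‖ = 1 := fun b => by
    rw [norm_mul, hc, norm_polygonVertex, one_mul]
  simp_rw [fun b => hterm _ (hunit b)]
  rw [Finset.sum_add_distrib, ← Finset.mul_sum, hsq, mul_zero, add_zero, Finset.sum_const,
    Finset.card_univ, Fintype.card_fin, nsmul_eq_mul, Complex.real_smul]
  simp

theorem sum_affine_polygonVertex {k : ℕ} (hk : 2 ≤ k) (c w : ℂ) :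
    ∑ b : Fin k, (k : ℝ)⁻¹ * (1 + 2 * ⟪c * polygonVertex k b, w⟫_ℝ) = 1 := by
  have hk' : (k : ℝ) ≠ 0 := by positivity
  rw [← Finset.mul_sum, Finset.sum_add_distrib, ← Finset.mul_sum, ← sum_inner, ← Finset.mul_sum,
    sum_polygonVertex_eq_zero hk, mul_zero, inner_zero_left]
  simp [hk']

theorem sum_affine_smul_polygonVertex {k : ℕ} (hk : 3 ≤ k) {c : ℂ} (hc : ‖c‖ = 1) (w : ℂ) :
    ∑ b : Fin k, ((k : ℝ)⁻¹ * (1 + 2 * ⟪c * polygonVertex k b, w⟫_ℝ)) • (c * polygonVertex k b)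
      = w := by
  have hk' : (k : ℝ) ≠ 0 := by positivity
  calc _ = (k : ℝ)⁻¹ • (c * ∑ b : Fin k, polygonVertex k b
          + ∑ b : Fin k, (2 * ⟪c * polygonVertex k b, w⟫_ℝ) • (c * polygonVertex k b)) := by
        rw [Finset.mul_sum, ← Finset.sum_add_distrib, Finset.smul_sum]
        exact Finset.sum_congr rfl fun b _ => by module
    _ = w := by
        rw [sum_polygonVertex_eq_zero (by omega), mul_zero, zero_add,
          sum_inner_smul_polygonVertex hk hc, smul_smul, inv_mul_cancel₀ hk', one_smul]

theorem exists_inner_polygonVertex_le {k : ℕ} (hk : 0 < k) (z : ℂ) :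
    ∃ b : Fin k, ⟪z, polygonVertex k b⟫_ℝ ≤ -(‖z‖ * Real.cos (π / k)) := by
  obtain ⟨b, hb⟩ := exists_cos_le_cos_two_pi_mul_div_sub hk (z.arg + π)
  rw [← sub_sub, Real.cos_sub_pi] at hb
  refine ⟨b, ?_⟩
  have hz : z = ‖z‖ • Complex.exp (z.arg * Complex.I) := by
    rw [Complex.real_smul, Complex.norm_mul_exp_arg_mul_I]
  rw [hz, real_inner_smul_left, polygonVertex, inner_exp_ofReal_mul_I, norm_smul,
    Complex.norm_exp_ofReal_mul_I, mul_one, norm_norm]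
  nlinarith [mul_le_mul_of_nonneg_left hb (norm_nonneg z)]

theorem neg_cos_le_inner_polygonVertex (k l b : ℕ) :
    -Real.cos (π / k) ≤
      ⟪Complex.exp ((π + π / k : ℝ) * Complex.I) * polygonVertex k l, polygonVertex k b⟫_ℝ := by
  rw [polygonVertex, polygonVertex, ← Complex.exp_add, ← add_mul, ← Complex.ofReal_add,
    inner_exp_ofReal_mul_I, show 2 * π * b / k - (π + π / k + 2 * π * l / k)
      = (2 * ((b : ℤ) - l - 1 : ℤ) + 1) * π / k - π by push_cast; ring, Real.cos_sub_pi]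
  linarith [cos_odd_mul_pi_div_le k ((b : ℤ) - l - 1)]

def blochMatrix (a : ℝ) (w : ℂ) : Matrix (Fin 2) (Fin 2) ℂ :=
  a • (1 : Matrix (Fin 2) (Fin 2) ℂ) + w.re • σx + w.im • σz

theorem blochMatrix_eq_of (a : ℝ) (w : ℂ) :
    blochMatrix a w = !![(a + w.im : ℂ), w.re; w.re, a - w.im] := by
  ext i j
  fin_cases i <;> fin_cases j <;> simp [blochMatrix, σx, σz, sub_eq_add_neg]

theorem blochMatrix_zero : blochMatrix 0 0 = 0 := by
  simp [blochMatrix]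

theorem blochMatrix_one_zero : blochMatrix 1 0 = 1 := by
  simp [blochMatrix]

theorem sum_smul_blochMatrix {ι : Type*} [Fintype ι] (r a : ι → ℝ) (w : ι → ℂ) :
    ∑ i, r i • blochMatrix (a i) (w i) = blochMatrix (∑ i, r i * a i) (∑ i, r i • w i) := by
  simp only [blochMatrix, smul_add, Finset.sum_add_distrib, smul_smul, ← Finset.sum_smul,
    Complex.re_sum, Complex.im_sum, Complex.smul_re, Complex.smul_im, smul_eq_mul]

theorem blochMatrix_eq_sum_smul_polygonVertex {k : ℕ} (hk : 3 ≤ k) {c : ℂ} (hc : ‖c‖ = 1)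
    (w : ℂ) :
    blochMatrix (k : ℝ)⁻¹ ((k : ℝ)⁻¹ • w) = ∑ l : Fin k,
      ((k : ℝ)⁻¹ * (1 + 2 * ⟪c * polygonVertex k l, w⟫_ℝ)) •
        blochMatrix (k : ℝ)⁻¹ ((k : ℝ)⁻¹ • (c * polygonVertex k l)) := by
  rw [sum_smul_blochMatrix, ← Finset.sum_mul, sum_affine_polygonVertex (by omega), one_mul]
  congr 1
  calc (k : ℝ)⁻¹ • w = (k : ℝ)⁻¹ • ∑ l : Fin k,
        ((k : ℝ)⁻¹ * (1 + 2 * ⟪c * polygonVertex k l, w⟫_ℝ)) • (c * polygonVertex k l) := by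
        rw [sum_affine_smul_polygonVertex hk hc]
    _ = _ := by
        rw [Finset.smul_sum]
        exact Finset.sum_congr rfl fun l _ => smul_comm _ _ _

theorem star_dotProduct_blochMatrix_mulVec (a : ℝ) (w : ℂ) (x : Fin 2 → ℂ) :
    star x ⬝ᵥ (blochMatrix a w *ᵥ x) =
      ((a * (Complex.normSq (x 0) + Complex.normSq (x 1))
        + w.im * (Complex.normSq (x 0) - Complex.normSq (x 1))
        + 2 * w.re * (conj (x 0) * x 1).re : ℝ) : ℂ) := by
  rw [blochMatrix_eq_of]
  apply Complex.ext <;>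
    simp [dotProduct, Matrix.mulVec, Fin.sum_univ_two, Complex.normSq_apply] <;> ring

theorem posSemidef_blochMatrix {a : ℝ} {w : ℂ} (h : ‖w‖ ≤ a) : (blochMatrix a w).PosSemidef := by
  rw [Matrix.posSemidef_iff_dotProduct_mulVec]
  refine ⟨?_, fun x => ?_⟩
  · rw [blochMatrix_eq_of]
    ext i j
    fin_cases i <;> fin_cases j <;> simp [Matrix.conjTranspose_apply]
  rw [star_dotProduct_blochMatrix_mulVec, Complex.nonneg_iff]
  simp only [Complex.ofReal_re, Complex.ofReal_im, and_true]
  set p := Complex.normSq (x 0)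
  set q := Complex.normSq (x 1)
  set s := (conj (x 0) * x 1).re
  have hp : 0 ≤ p := Complex.normSq_nonneg _
  have hq : 0 ≤ q := Complex.normSq_nonneg _
  have hs : s ^ 2 ≤ p * q := by
    have := Complex.re_sq_le_normSq (conj (x 0) * x 1)
    rw [Complex.normSq_mul, Complex.normSq_conj] at this
    nlinarith
  have ha : 0 ≤ a := (norm_nonneg w).trans h
  have hw : w.re ^ 2 + w.im ^ 2 ≤ a ^ 2 := by
    have := Complex.normSq_apply w
    rw [← Complex.sq_norm] at this
    nlinarith [norm_nonneg w]
  -- Lagrange's identity, then `(p - q)² + 4 s² ≤ (p + q)²`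
  have hcs : (w.im * (p - q) + 2 * w.re * s) ^ 2 ≤ (a * (p + q)) ^ 2 :=
    calc (w.im * (p - q) + 2 * w.re * s) ^ 2
        ≤ (w.im * (p - q) + 2 * w.re * s) ^ 2 + (2 * w.im * s - w.re * (p - q)) ^ 2 := by
          nlinarith
      _ = (w.re ^ 2 + w.im ^ 2) * ((p - q) ^ 2 + 4 * s ^ 2) := by ring
      _ ≤ a ^ 2 * (p + q) ^ 2 := by
          gcongr
          nlinarith
      _ = (a * (p + q)) ^ 2 := by ring
  linarith [(abs_le_of_sq_le_sq' hcs (by positivity)).1]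

/-- For Hermitian `A = t • 1 + x • σx + y • σy + z • σz`, `traceCoord A = t`. -/
def traceCoord : Matrix (Fin 2) (Fin 2) ℂ →ₗ[ℝ] ℝ where
  toFun A := ((A 0 0).re + (A 1 1).re) / 2
  map_add' A B := by simp only [Matrix.add_apply, Complex.add_re]; ring
  map_smul' r A := by
    simp only [Matrix.smul_apply, Complex.smul_re, smul_eq_mul, RingHom.id_apply]
    ring

/-- For Hermitian `A = t • 1 + x • σx + y • σy + z • σz`, `blochCoord A = x + z i`. -/
def blochCoord : Matrix (Fin 2) (Fin 2) ℂ →ₗ[ℝ] ℂ where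
  toFun A := ⟨(A 0 1).re, ((A 0 0).re - (A 1 1).re) / 2⟩
  map_add' A B := Complex.ext (by simp) (by simp; ring)
  map_smul' r A := Complex.ext (by simp) (by simp; ring)

@[simp] theorem traceCoord_blochMatrix (a : ℝ) (w : ℂ) : traceCoord (blochMatrix a w) = a := by
  simp [traceCoord, blochMatrix_eq_of]

@[simp] theorem blochCoord_blochMatrix (a : ℝ) (w : ℂ) : blochCoord (blochMatrix a w) = w := by
  apply Complex.ext <;> simp [blochCoord, blochMatrix_eq_of]

theorem Matrix.PosSemidef.norm_blochCoord_le {A : Matrix (Fin 2) (Fin 2) ℂ} (hA : A.PosSemidef) :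
    ‖blochCoord A‖ ≤ traceCoord A := by
  obtain ⟨h0, h0'⟩ := Complex.nonneg_iff.1 (hA.diag_nonneg (i := 0))
  obtain ⟨h1, h1'⟩ := Complex.nonneg_iff.1 (hA.diag_nonneg (i := 1))
  have h10 : A 1 0 = conj (A 0 1) := by rw [← hA.isHermitian.apply 0 1]; simp
  have hdet := (Complex.nonneg_iff.1 hA.det_nonneg).1
  rw [Matrix.det_fin_two, h10] at hdet
  simp only [Complex.sub_re, Complex.mul_re, Complex.conj_re, Complex.conj_im, ← h0', ← h1']
    at hdet
  rw [Complex.norm_def, ← Real.sqrt_sq (by simp [traceCoord]; positivity : 0 ≤ traceCoord A)]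
  refine Real.sqrt_le_sqrt ?_
  simp only [blochCoord, traceCoord, LinearMap.coe_mk, AddHom.coe_mk, Complex.normSq_mk]
  nlinarith [sq_nonneg (A 0 1).im]

theorem eq_of_mem_povmPolytope {d : ℕ} {C : Type*} [Fintype C] {N : C → Matrix (Fin d) (Fin d) ℂ}
    {q p : C → ℝ} (hq : q ∈ povmPolytope N) (hN : ∑ c, (q c - p c) • N c = 0)
    (hp : ∑ c, (q c - p c) * p c = 0) : q = p := by
  have hsq : ∑ c, (q c - p c) ^ 2 = 0 :=
    calc ∑ c, (q c - p c) ^ 2 = ∑ c, (q c - p c) * q c - ∑ c, (q c - p c) * p c := by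
          rw [← Finset.sum_sub_distrib]
          exact Finset.sum_congr rfl fun c _ => by ring
      _ = 0 := by rw [hq.2.2 _ hN, hp, sub_zero]
  funext c
  exact sub_eq_zero.1 <| pow_eq_zero_iff two_ne_zero |>.1 <|
    (Finset.sum_eq_zero_iff_of_nonneg fun c _ => sq_nonneg _).1 hsq c (Finset.mem_univ c)

theorem mem_povmPolytope_of_linearMap {d : ℕ} {C : Type*} [Fintype C]
    {N : C → Matrix (Fin d) (Fin d) ℂ} (f : Matrix (Fin d) (Fin d) ℂ →ₗ[ℝ] ℝ)
    (h0 : ∀ c, 0 ≤ f (N c)) (h1 : ∑ c, f (N c) = 1) : (fun c => f (N c)) ∈ povmPolytope N := by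
  refine ⟨h0, h1, fun β hβ => ?_⟩
  simpa using congrArg f hβ

def noisyPlanarMeas (k : ℕ) (η : ℝ) (b : Fin k) : Matrix (Fin 2) (Fin 2) ℂ :=
  blochMatrix (k : ℝ)⁻¹ ((η / k) • polygonVertex k b)

theorem smul_planarMeas_add_smul_one (k : ℕ) (η : ℝ) (b : Fin k) :
    η • planarMeas k b + ((1 - η) * (k : ℝ)⁻¹) • (1 : Matrix (Fin 2) (Fin 2) ℂ) =
      noisyPlanarMeas k η b := by
  rw [noisyPlanarMeas, blochMatrix, planarMeas, polygonVertex, Complex.smul_re, Complex.smul_im,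
    Complex.exp_ofReal_mul_I_re, Complex.exp_ofReal_mul_I_im]
  module

def polygonMoment {k : ℕ} (q : Fin k → ℝ) : ℂ := ∑ b, q b • polygonVertex k b

theorem eq_of_mem_povmPolytope_noisyPlanarMeas {k : ℕ} (hk : 3 ≤ k) {η : ℝ} {q : Fin k → ℝ}
    (hq : q ∈ povmPolytope (noisyPlanarMeas k η)) (b : Fin k) :
    q b = (k : ℝ)⁻¹ * (1 + 2 * ⟪polygonVertex k b, polygonMoment q⟫_ℝ) := by
  set ω : Fin k → ℂ := fun c => polygonVertex k c
  set p : Fin k → ℝ := fun b => (k : ℝ)⁻¹ * (1 + 2 * ⟪ω b, polygonMoment q⟫_ℝ)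
  have hsum : ∑ c, (q c - p c) = 0 := by
    have h := sum_affine_polygonVertex (k := k) (by omega) 1 (polygonMoment q)
    simp only [one_mul] at h
    rw [Finset.sum_sub_distrib, hq.2.1, sub_eq_zero]
    exact h.symm
  have hmoment : ∑ c, (q c - p c) • ω c = 0 := by
    rw [Finset.sum_congr rfl fun c _ => sub_smul _ _ _, Finset.sum_sub_distrib, sub_eq_zero]
    have h := sum_affine_smul_polygonVertex hk (c := 1) (by simp) (polygonMoment q)
    simp only [one_mul] at h
    exact h.symm
  have hN : ∑ c, (q c - p c) • noisyPlanarMeas k η c = 0 := by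
    have : ∑ c, (q c - p c) • (η / k) • ω c = (η / k) • ∑ c, (q c - p c) • ω c := by
      rw [Finset.smul_sum]
      exact Finset.sum_congr rfl fun c _ => smul_comm _ _ _
    simp only [noisyPlanarMeas]
    rw [sum_smul_blochMatrix, ← Finset.sum_mul, hsum, zero_mul, this, hmoment, smul_zero,
      blochMatrix_zero]
  have hp : ∑ c, (q c - p c) * p c = 0 :=
    calc ∑ c, (q c - p c) * p c
        = (k : ℝ)⁻¹ * (∑ c, (q c - p c) + 2 * ⟪∑ c, (q c - p c) • ω c, polygonMoment q⟫_ℝ) := by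
          rw [sum_inner, Finset.mul_sum, ← Finset.sum_add_distrib, Finset.mul_sum]
          refine Finset.sum_congr rfl fun c _ => ?_
          rw [real_inner_smul_left]
          ring
      _ = 0 := by rw [hsum, hmoment, inner_zero_left]; ring
  exact congrFun (eq_of_mem_povmPolytope hq hN hp) b

theorem two_mul_norm_polygonMoment_mul_cos_le_one {k : ℕ} (hk : 3 ≤ k) {η : ℝ}
    {q : Fin k → ℝ} (hq : q ∈ povmPolytope (noisyPlanarMeas k η)) :
    2 * ‖polygonMoment q‖ * Real.cos (π / k) ≤ 1 := by
  obtain ⟨b, hb⟩ := exists_inner_polygonVertex_le (show 0 < k by omega) (polygonMoment q)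
  have h := hq.1 b
  rw [eq_of_mem_povmPolytope_noisyPlanarMeas hk hq b, real_inner_comm] at h
  linarith [(mul_nonneg_iff_of_pos_left (by positivity : (0 : ℝ) < (k : ℝ)⁻¹)).1 h]

theorem two_mul_mul_cos_le_one_of_isClassicalPOVM {k : ℕ} (hk : 3 ≤ k) {η : ℝ}
    (h : IsClassicalPOVM (noisyPlanarMeas k η)) : 2 * η * Real.cos (π / k) ≤ 1 := by
  obtain ⟨n, G, q, hG, hGsum, hq, hN⟩ := h
  have hk' : (k : ℝ) ≠ 0 := by positivity
  set ω : Fin k → ℂ := fun c => polygonVertex k c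
  set Q : Fin n → ℂ := fun l => polygonMoment (q l)
  have hη : η = ∑ l, ⟪Q l, blochCoord (G l)⟫_ℝ :=
    calc η = ∑ b, ⟪ω b, blochCoord (noisyPlanarMeas k η b)⟫_ℝ := by
          simp only [ω, noisyPlanarMeas, blochCoord_blochMatrix, real_inner_smul_right,
            real_inner_self_eq_norm_sq, norm_polygonVertex, one_pow, mul_one, Finset.sum_const,
            Finset.card_univ, Fintype.card_fin, nsmul_eq_mul]
          field_simp
      _ = ∑ b, ∑ l, q l b * ⟪ω b, blochCoord (G l)⟫_ℝ := by
          simp only [hN, map_sum, map_smul, inner_sum, real_inner_smul_right]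
      _ = ∑ l, ⟪Q l, blochCoord (G l)⟫_ℝ := by
          rw [Finset.sum_comm]
          simp only [Q, polygonMoment, sum_inner, real_inner_smul_left]
          rfl
  have htrace : ∑ l, traceCoord (G l) = 1 := by
    rw [← map_sum, hGsum, ← blochMatrix_one_zero, traceCoord_blochMatrix]
  have hcos := cos_pi_div_pos (k := k) (by omega)
  calc 2 * η * Real.cos (π / k) = ∑ l, 2 * Real.cos (π / k) * ⟪Q l, blochCoord (G l)⟫_ℝ := by
        rw [hη, Finset.mul_sum, Finset.sum_mul]
        exact Finset.sum_congr rfl fun l _ => by ring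
    _ ≤ ∑ l, traceCoord (G l) := by
        refine Finset.sum_le_sum fun l _ => ?_
        calc 2 * Real.cos (π / k) * ⟪Q l, blochCoord (G l)⟫_ℝ
            ≤ 2 * Real.cos (π / k) * (‖Q l‖ * ‖blochCoord (G l)‖) := by
              gcongr
              exact real_inner_le_norm _ _
          _ = (2 * ‖Q l‖ * Real.cos (π / k)) * ‖blochCoord (G l)‖ := by ring
          _ ≤ 1 * traceCoord (G l) := by
              gcongr
              · exact two_mul_norm_polygonMoment_mul_cos_le_one hk (hq l)
              · exact (hG l).norm_blochCoord_le
          _ = traceCoord (G l) := one_mul _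
    _ = 1 := htrace

theorem isClassicalPOVM_noisyPlanarMeas {k : ℕ} (hk : 3 ≤ k) {η : ℝ} (hη0 : 0 ≤ η)
    (hη : 2 * η * Real.cos (π / k) ≤ 1) : IsClassicalPOVM (noisyPlanarMeas k η) := by
  have hk' : (k : ℝ) ≠ 0 := by positivity
  set ω : Fin k → ℂ := fun b => polygonVertex k b
  -- `u l` points away from the midpoint of the edge `[ω l, ω (l + 1)]`
  set c : ℂ := Complex.exp ((π + π / k : ℝ) * Complex.I)
  have hc : ‖c‖ = 1 := Complex.norm_exp_ofReal_mul_I _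
  set u : Fin k → ℂ := fun l => c * ω l
  have hu : ∑ l, u l = 0 := by rw [← Finset.mul_sum, sum_polygonVertex_eq_zero (by omega), mul_zero]
  set f : Fin k → Matrix (Fin 2) (Fin 2) ℂ →ₗ[ℝ] ℝ :=
    fun l => traceCoord + (2 : ℝ) • (innerₗ ℂ (u l)).comp blochCoord
  have hf : ∀ l b, f l (noisyPlanarMeas k η b) = (k : ℝ)⁻¹ * (1 + 2 * ⟪u l, η • ω b⟫_ℝ) := by
    intro l b
    simp only [f, noisyPlanarMeas, LinearMap.add_apply, LinearMap.smul_apply,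
      LinearMap.comp_apply, traceCoord_blochMatrix, blochCoord_blochMatrix, innerₗ_apply_apply,
      real_inner_smul_right, smul_eq_mul, ω]
    ring
  refine ⟨k, fun l => blochMatrix (k : ℝ)⁻¹ ((k : ℝ)⁻¹ • u l),
    fun l b => f l (noisyPlanarMeas k η b), fun l => ?_, ?_, fun l => ?_, fun b => ?_⟩
  · refine posSemidef_blochMatrix ?_
    rw [norm_smul, norm_mul, hc, norm_polygonVertex, Real.norm_of_nonneg (by positivity)]
    simp
  · have := sum_smul_blochMatrix (fun _ : Fin k => (1 : ℝ)) (fun _ => (k : ℝ)⁻¹)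
      (fun l => (k : ℝ)⁻¹ • u l)
    simp only [one_smul, one_mul] at this
    rw [this, ← Finset.smul_sum, hu, smul_zero, Finset.sum_const, Finset.card_univ,
      Fintype.card_fin, nsmul_eq_mul, mul_inv_cancel₀ hk', blochMatrix_one_zero]
  · refine mem_povmPolytope_of_linearMap (f l) (fun b => ?_) ?_
    · rw [hf, real_inner_smul_right]
      have := neg_cos_le_inner_polygonVertex k l b
      have : 0 ≤ 1 + 2 * (η * ⟪u l, ω b⟫_ℝ) := by nlinarith
      positivity
    · simp only [hf, ← Finset.mul_sum, Finset.sum_add_distrib, ← Finset.smul_sum, ← inner_sum,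
        sum_polygonVertex_eq_zero (show 2 ≤ k by omega), ω, smul_zero, inner_zero_right]
      simp [hk']
  · simp only [hf]
    rw [noisyPlanarMeas, div_eq_inv_mul, ← smul_smul, blochMatrix_eq_sum_smul_polygonVertex hk hc]

theorem planar_measurement_white_noise_robustness
    (k : ℕ) (hk : 4 ≤ k) (η : ℝ) (hη : η ∈ Set.Icc (0 : ℝ) 1) :
    IsClassicalPOVM
        (fun b : Fin k =>
          η • planarMeas k b + ((1 - η) * (k : ℝ)⁻¹) • (1 : Matrix (Fin 2) (Fin 2) ℂ)) ↔
      η ≤ 1 / (2 * Real.cos (π / k)) := by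
  rw [funext (smul_planarMeas_add_smul_one k η),
    le_div_iff₀ (mul_pos two_pos (cos_pi_div_pos (by omega))), ← mul_assoc, mul_comm η]
  exact ⟨two_mul_mul_cos_le_one_of_isClassicalPOVM (by omega),
    isClassicalPOVM_noisyPlanarMeas (by omega) hη.1⟩
end
end

section
/- Let d ≥ 1, let A be a finite set, and let ρ : A → Matrix (Fin d) (Fin d) ℂ be a set of pure states, i.e. for every a there is a nonzero vector v_a ∈ ℂ^d with ρ_a = v_a v_aᴴ and Tr(ρ_a) = 1. Suppose the set of states ρ is nonclassical. Then for every ω ∈ [0,1), there do NOT exist families γ : A → Matrix (Fin d) (Fin d) ℂ and κ : A → Matrix (Fin d) (Fin d) ℂ of density matrices (positive semidefinite, trace 1) such that (i) ρ_a = ω • γ_a + (1−ω) • κ_a for all a, (ii) for every α : A → ℝ with ∑_a α(a) • ρ_a = 0 one has ∑_a α(a) • γ_a = 0 and ∑_a α(a) • κ_a = 0, and (iii) the set of states κ is classical. (In other words, the nonclassical fraction of any nonclassical set of pure states equals 1.) -/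
open Matrix BigOperators
open scoped ComplexOrder

noncomputable section

/-! Each `ρ a = v vᴴ` dominates `(1 - ω) • κ a` in the Loewner order, since the difference is
`ω • γ a ≥ 0`. A positive semidefinite matrix below a rank-one projection is a multiple of it, and
comparing traces gives `κ a = ρ a`. So `κ = ρ`, which cannot be classical. -/

namespace Matrix.PosSemidef

variable {𝕜 : Type*} [RCLike 𝕜] {n : Type*} [Fintype n] {X : Matrix n n 𝕜} {v : n → 𝕜}

theorem mulVec_eq_zero_of_le_vecMulVec (hX : X.PosSemidef)
    (hle : (vecMulVec v (star v) - X).PosSemidef) {w : n → 𝕜} (hw : star v ⬝ᵥ w = 0) :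
    X *ᵥ w = 0 := by
  rw [← hX.dotProduct_mulVec_zero_iff]
  have h := hle.dotProduct_mulVec_nonneg w
  rw [sub_mulVec, dotProduct_sub, vecMulVec_mulVec, op_smul_eq_smul, hw,
    zero_smul, dotProduct_zero, zero_sub, neg_nonneg] at h
  exact le_antisymm h (hX.dotProduct_mulVec_nonneg w)

theorem eq_mul_vecMulVec_of_le_vecMulVec (hv : star v ⬝ᵥ v = 1) (hX : X.PosSemidef)
    (hle : (vecMulVec v (star v) - X).PosSemidef) :
    X = X * vecMulVec v (star v) := by
  refine ext_iff_mulVec.mpr fun u => ?_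
  have hperp : star v ⬝ᵥ (u - (star v ⬝ᵥ u) • v) = 0 := by
    rw [dotProduct_sub, dotProduct_smul, hv, smul_eq_mul, mul_one, sub_self]
  have h := hX.mulVec_eq_zero_of_le_vecMulVec hle hperp
  rw [mulVec_sub, sub_eq_zero] at h
  rw [h, ← mulVec_mulVec, vecMulVec_mulVec, op_smul_eq_smul]

theorem eq_smul_vecMulVec_of_le_vecMulVec (hv : star v ⬝ᵥ v = 1) (hX : X.PosSemidef)
    (hle : (vecMulVec v (star v) - X).PosSemidef) :
    X = (star v ⬝ᵥ X *ᵥ v) • vecMulVec v (star v) := by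
  have hXP := hX.eq_mul_vecMulVec_of_le_vecMulVec hv hle
  have hPX : X = vecMulVec v (star v) * X := by
    conv_lhs => rw [← hX.isHermitian.eq, hXP, conjTranspose_mul, conjTranspose_vecMulVec,
      star_star, hX.isHermitian.eq]
  calc X = vecMulVec v (star v) * X * vecMulVec v (star v) := by rw [← hPX, ← hXP]
    _ = (star v ⬝ᵥ X *ᵥ v) • vecMulVec v (star v) := by
      rw [vecMulVec_mul, vecMulVec_mul_vecMulVec, vecMulVec_smul, dotProduct_mulVec]

end Matrix.PosSemidef

theorem Matrix.eq_vecMulVec_of_vecMulVec_eq_smul_add_smul {𝕜 : Type*} [RCLike 𝕜] {n : Type*}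
    [Fintype n] {v : n → 𝕜} {γ κ : Matrix n n 𝕜} {ω : ℝ} (hv : star v ⬝ᵥ v = 1)
    (hγ : γ.PosSemidef) (hκ : κ.PosSemidef) (hκtr : κ.trace = 1) (hω0 : 0 ≤ ω) (hω1 : ω < 1)
    (h : vecMulVec v (star v) = ω • γ + (1 - ω) • κ) :
    κ = vecMulVec v (star v) := by
  have hle : (vecMulVec v (star v) - (1 - ω) • κ).PosSemidef := by
    rw [h, add_sub_cancel_right]
    exact hγ.smul hω0
  have hmul := (hκ.smul (sub_nonneg.mpr hω1.le)).eq_smul_vecMulVec_of_le_vecMulVec hv hle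
  set c := star v ⬝ᵥ ((1 - ω) • κ) *ᵥ v
  have hc : ((1 - ω : ℝ) : 𝕜) = c := by
    simpa [trace_smul, hκtr, dotProduct_comm v, hv, RCLike.real_smul_eq_coe_smul (K := 𝕜)]
      using congrArg trace hmul
  rw [← hc, ← RCLike.real_smul_eq_coe_smul] at hmul
  exact smul_right_injective _ (sub_ne_zero.mpr hω1.ne') hmul

theorem nonclassical_fraction_of_pure_states_is_one_general
    {d : ℕ} {A : Type*} [Fintype A]
    (ρ : A → Matrix (Fin d) (Fin d) ℂ)
    (hpure : ∀ a, ∃ v : Fin d → ℂ, v ≠ 0 ∧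
      ρ a = Matrix.of (fun i j => v i * star (v j)))
    (htr : ∀ a, (ρ a).trace = 1)
    (hnc : ¬ IsClassicalStates ρ)
    (ω : ℝ) (hω0 : 0 ≤ ω) (hω1 : ω < 1) :
    ¬ ∃ γ κ : A → Matrix (Fin d) (Fin d) ℂ,
        (∀ a, (γ a).PosSemidef) ∧ (∀ a, (γ a).trace = 1) ∧
        (∀ a, (κ a).PosSemidef) ∧ (∀ a, (κ a).trace = 1) ∧
        (∀ a, ρ a = ω • γ a + (1 - ω) • κ a) ∧
        (∀ α : A → ℝ, (∑ a : A, α a • ρ a = 0) →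
          (∑ a : A, α a • γ a = 0) ∧ (∑ a : A, α a • κ a = 0)) ∧
        IsClassicalStates κ := by
  rintro ⟨γ, κ, hγ, -, hκ, hκtr, hmix, -, hκcl⟩
  have hκρ : κ = ρ := funext fun a => by
    obtain ⟨v, -, hρv⟩ := hpure a
    change ρ a = vecMulVec v (star v) at hρv
    have hv : star v ⬝ᵥ v = 1 := by
      rw [dotProduct_comm, ← trace_vecMulVec, ← hρv, htr a]
    rw [hρv]
    exact eq_vecMulVec_of_vecMulVec_eq_smul_add_smul hv (hγ a) (hκ a) (hκtr a) hω0 hω1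
      (hρv ▸ hmix a)
  exact hnc (hκρ ▸ hκcl)

theorem nonclassical_fraction_of_pure_states_is_one
    {d : ℕ} (hd : 1 ≤ d) {A : Type*} [Fintype A]
    (ρ : A → Matrix (Fin d) (Fin d) ℂ)
    (hpure : ∀ a, ∃ v : Fin d → ℂ, v ≠ 0 ∧
      ρ a = Matrix.of (fun i j => v i * star (v j)))
    (htr : ∀ a, (ρ a).trace = 1)
    (hnc : ¬ IsClassicalStates ρ)
    (ω : ℝ) (hω0 : 0 ≤ ω) (hω1 : ω < 1) :
    ¬ ∃ γ κ : A → Matrix (Fin d) (Fin d) ℂ,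
        (∀ a, (γ a).PosSemidef) ∧ (∀ a, (γ a).trace = 1) ∧
        (∀ a, (κ a).PosSemidef) ∧ (∀ a, (κ a).trace = 1) ∧
        (∀ a, ρ a = ω • γ a + (1 - ω) • κ a) ∧
        (∀ α : A → ℝ, (∑ a : A, α a • ρ a = 0) →
          (∑ a : A, α a • γ a = 0) ∧ (∑ a : A, α a • κ a = 0)) ∧
        IsClassicalStates κ :=
  nonclassical_fraction_of_pure_states_is_one_general ρ hpure htr hnc ω hω0 hω1
end
end
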